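/- arXiv:1608.03245 — 12 statements merged into one kernel-verified Lean document; each statement's English description precedes it below -/
import Mathlib

section
/- For any positive integer d, there do not exist two finitely supported random variables X and Y taking values in ℝ^d (equivalently, two finitely supported probability distributions on ℝ^d) such that both E_{x₁,x₂∼X}[‖x₁−x₂‖₁] > E_{x∼X, y∼Y}[‖x−y‖₁] and E_{y₁,y₂∼Y}[‖y₁−y₂‖₁] > E_{x∼X, y∼Y}[‖x−y‖₁], where in each expectation the samples are drawn independently. -/
/-!
The `ℓ1` distance is of negative type: `∑ₐ ∑_b c a * c b * ‖a - b‖₁ ≤ 0` whenever `∑ c = 0`.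
In one dimension this is because `|a - b| = ∫ (𝟙[a ≤ t] - 𝟙[b ≤ t])² dt`, which turns the
quadratic form into `-2 ∫ (∑ₐ c a * 𝟙[a ≤ t])² dt`; summing over coordinates gives `ℓ1`.
Applied to `c = wX - wY`, negative type says `E‖X - X'‖ + E‖Y - Y'‖ ≤ 2 E‖X - Y‖`,
so the two crossing distances cannot both be exceeded.
-/

open Finset MeasureTheory Set

section NegativeType

variable {α : Type*}

def IsNegativeType (D : α → α → ℝ) : Prop :=
  ∀ (S : Finset α) (c : α → ℝ), ∑ a ∈ S, c a = 0 → ∑ a ∈ S, ∑ b ∈ S, c a * c b * D a b ≤ 0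

theorem IsNegativeType.sum {ι : Type*} (s : Finset ι) {D : ι → α → α → ℝ}
    (hD : ∀ i ∈ s, IsNegativeType (D i)) :
    IsNegativeType fun a b => ∑ i ∈ s, D i a b := by
  intro S c hc
  calc ∑ a ∈ S, ∑ b ∈ S, c a * c b * ∑ i ∈ s, D i a b
      = ∑ i ∈ s, ∑ a ∈ S, ∑ b ∈ S, c a * c b * D i a b := by
        simp only [mul_sum]
        exact (sum_congr rfl fun a _ => sum_comm).trans sum_comm
    _ ≤ 0 := sum_nonpos fun i hi => hD i hi S c hc

theorem sum_sum_mul_mul_sq_sub_of_sum_eq_zero (S : Finset α) {c : α → ℝ}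
    (hc : ∑ a ∈ S, c a = 0) (v : α → ℝ) :
    ∑ a ∈ S, ∑ b ∈ S, c a * c b * (v a - v b) ^ 2 = -2 * (∑ a ∈ S, c a * v a) ^ 2 := by
  have expand : ∑ a ∈ S, ∑ b ∈ S, c a * c b * (v a - v b) ^ 2
      = (∑ a ∈ S, c a * v a ^ 2) * (∑ b ∈ S, c b) + (∑ a ∈ S, c a) * (∑ b ∈ S, c b * v b ^ 2)
        - 2 * ((∑ a ∈ S, c a * v a) * (∑ b ∈ S, c b * v b)) := by
    rw [sum_mul_sum, sum_mul_sum, sum_mul_sum, mul_sum, ← sum_add_distrib, ← sum_sub_distrib]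
    refine sum_congr rfl fun a _ => ?_
    rw [mul_sum, ← sum_add_distrib, ← sum_sub_distrib]
    exact sum_congr rfl fun b _ => by ring
  rw [expand, hc]
  ring

theorem sq_indicator_Ici_sub_indicator_Ici (a b : ℝ) :
    (fun t => ((Ici a).indicator 1 t - (Ici b).indicator 1 t : ℝ) ^ 2)
      = (Ico (min a b) (max a b)).indicator 1 := by
  funext t
  by_cases ha : a ≤ t <;> by_cases hb : b ≤ t <;> simp [indicator_apply, ha, hb]

theorem abs_sub_eq_integral_sq_indicator_Ici_sub (a b : ℝ) :
    |a - b| = ∫ t, ((Ici a).indicator 1 t - (Ici b).indicator 1 t : ℝ) ^ 2 := by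
  rw [sq_indicator_Ici_sub_indicator_Ici, integral_indicator_one measurableSet_Ico,
    Real.volume_real_Ico_of_le min_le_max, max_sub_min_eq_abs', abs_sub_comm]

theorem integrable_sq_indicator_Ici_sub_indicator_Ici (a b : ℝ) :
    Integrable fun t => ((Ici a).indicator 1 t - (Ici b).indicator 1 t : ℝ) ^ 2 := by
  rw [sq_indicator_Ici_sub_indicator_Ici, integrable_indicator_iff measurableSet_Ico]
  exact integrableOn_const measure_Ico_lt_top.ne

theorem isNegativeType_abs_sub_comp (f : α → ℝ) : IsNegativeType fun a b => |f a - f b| := by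
  intro S c hc
  set step : α → ℝ → ℝ := fun a t => (Ici (f a)).indicator 1 t
  have hint : ∀ a b, Integrable fun t => c a * c b * (step a t - step b t) ^ 2 :=
    fun a b => (integrable_sq_indicator_Ici_sub_indicator_Ici (f a) (f b)).const_mul _
  calc ∑ a ∈ S, ∑ b ∈ S, c a * c b * |f a - f b|
      = ∫ t, ∑ a ∈ S, ∑ b ∈ S, c a * c b * (step a t - step b t) ^ 2 := by
        rw [integral_finsetSum _ fun a _ => integrable_finsetSum _ fun b _ => hint a b]
        refine sum_congr rfl fun a _ => ?_
        rw [integral_finsetSum _ fun b _ => hint a b]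
        refine sum_congr rfl fun b _ => ?_
        rw [abs_sub_eq_integral_sq_indicator_Ici_sub, integral_const_mul]
    _ = ∫ t, -2 * (∑ a ∈ S, c a * step a t) ^ 2 := by
        simp only [sum_sum_mul_mul_sq_sub_of_sum_eq_zero S hc]
    _ ≤ 0 := integral_nonpos fun t => mul_nonpos_of_nonpos_of_nonneg (by norm_num) (sq_nonneg _)

theorem isNegativeType_l1 (ι : Type*) [Fintype ι] :
    IsNegativeType fun x y : ι → ℝ => ∑ i, |x i - y i| :=
  IsNegativeType.sum (D := fun (i : ι) (x y : ι → ℝ) => |x i - y i|) univ fun i _ =>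
    isNegativeType_abs_sub_comp fun x : ι → ℝ => x i

theorem sum_sum_indicator_mul_indicator_mul {S s t : Finset α} (hs : s ⊆ S) (ht : t ⊆ S)
    (f g : α → ℝ) (D : α → α → ℝ) :
    ∑ a ∈ S, ∑ b ∈ S, (s : Set α).indicator f a * (t : Set α).indicator g b * D a b
      = ∑ a ∈ s, ∑ b ∈ t, f a * g b * D a b := by
  rw [← sum_subset hs fun a _ ha => by simp [ha]]
  refine sum_congr rfl fun a ha => ?_
  rw [← sum_subset ht fun b _ hb => by simp [hb]]
  refine sum_congr rfl fun b hb => ?_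
  rw [indicator_of_mem (mem_coe.2 ha), indicator_of_mem (mem_coe.2 hb)]

theorem IsNegativeType.add_le_two_mul_cross [DecidableEq α] {D : α → α → ℝ}
    (hD : IsNegativeType D) (hsymm : ∀ a b, D a b = D b a)
    {SX SY : Finset α} {wX wY : α → ℝ} (hmass : ∑ x ∈ SX, wX x = ∑ y ∈ SY, wY y) :
    ∑ x₁ ∈ SX, ∑ x₂ ∈ SX, wX x₁ * wX x₂ * D x₁ x₂ + ∑ y₁ ∈ SY, ∑ y₂ ∈ SY, wY y₁ * wY y₂ * D y₁ y₂
      ≤ 2 * ∑ x ∈ SX, ∑ y ∈ SY, wX x * wY y * D x y := by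
  set u := (SX : Set α).indicator wX
  set v := (SY : Set α).indicator wY
  have hX : SX ⊆ SX ∪ SY := subset_union_left
  have hY : SY ⊆ SX ∪ SY := subset_union_right
  have hc : ∑ a ∈ SX ∪ SY, (u a - v a) = 0 := by
    rw [sum_sub_distrib, sum_indicator_subset _ hX, sum_indicator_subset _ hY, hmass, sub_self]
  have hswap : ∑ y ∈ SY, ∑ x ∈ SX, wY y * wX x * D y x
      = ∑ x ∈ SX, ∑ y ∈ SY, wX x * wY y * D x y := by
    rw [sum_comm]
    exact sum_congr rfl fun x _ => sum_congr rfl fun y _ => by rw [hsymm]; ring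
  have hneg := hD _ _ hc
  simp only [sub_mul, mul_sub, sum_sub_distrib] at hneg
  rw [sum_sum_indicator_mul_indicator_mul hX hX, sum_sum_indicator_mul_indicator_mul hX hY,
    sum_sum_indicator_mul_indicator_mul hY hX, sum_sum_indicator_mul_indicator_mul hY hY,
    hswap] at hneg
  linarith

end NegativeType

theorem no_L1_distribution_general (d : ℕ) :
    ¬ ∃ (SX SY : Finset (Fin d → ℝ)) (wX wY : (Fin d → ℝ) → ℝ),
      (∀ x ∈ SX, 0 ≤ wX x) ∧ (∀ y ∈ SY, 0 ≤ wY y) ∧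
      (∑ x ∈ SX, wX x) = 1 ∧ (∑ y ∈ SY, wY y) = 1 ∧
      (∑ x₁ ∈ SX, ∑ x₂ ∈ SX, wX x₁ * wX x₂ * (∑ i, |x₁ i - x₂ i|)) >
        (∑ x ∈ SX, ∑ y ∈ SY, wX x * wY y * (∑ i, |x i - y i|)) ∧
      (∑ y₁ ∈ SY, ∑ y₂ ∈ SY, wY y₁ * wY y₂ * (∑ i, |y₁ i - y₂ i|)) >
        (∑ x ∈ SX, ∑ y ∈ SY, wX x * wY y * (∑ i, |x i - y i|)) := by
  rintro ⟨SX, SY, wX, wY, -, -, hX1, hY1, hXX, hYY⟩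
  classical
  have hcross := (isNegativeType_l1 (Fin d)).add_le_two_mul_cross
    (fun x y => sum_congr rfl fun i _ => abs_sub_comm (x i) (y i)) (hX1.trans hY1.symm)
  linarith

/-- For any positive integer `d`, there are no two finitely supported probability
distributions on `ℝ^d` such that the expected inner `ℓ1`-distance of each distribution
strictly exceeds the expected crossing `ℓ1`-distance. -/
theorem no_L1_distribution (d : ℕ) (hd : 0 < d) :
    ¬ ∃ (SX SY : Finset (Fin d → ℝ)) (wX wY : (Fin d → ℝ) → ℝ),
      (∀ x ∈ SX, 0 ≤ wX x) ∧ (∀ y ∈ SY, 0 ≤ wY y) ∧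
      (∑ x ∈ SX, wX x) = 1 ∧ (∑ y ∈ SY, wY y) = 1 ∧
      (∑ x₁ ∈ SX, ∑ x₂ ∈ SX, wX x₁ * wX x₂ * (∑ i, |x₁ i - x₂ i|)) >
        (∑ x ∈ SX, ∑ y ∈ SY, wX x * wY y * (∑ i, |x i - y i|)) ∧
      (∑ y₁ ∈ SY, ∑ y₂ ∈ SY, wY y₁ * wY y₂ * (∑ i, |y₁ i - y₂ i|)) >
        (∑ x ∈ SX, ∑ y ∈ SY, wX x * wY y * (∑ i, |x i - y i|)) :=
  no_L1_distribution_general d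
end

section
/- There do not exist two finitely supported real-valued random variables X and Y (equivalently, two finitely supported probability distributions on ℝ) such that both E_{x₁,x₂∼X}[|x₁−x₂|] > E_{x∼X, y∼Y}[|x−y|] and E_{y₁,y₂∼Y}[|y₁−y₂|] > E_{x∼X, y∼Y}[|x−y|], where in each expectation the samples are drawn independently. -/
/-!
The kernel `|a - b|` is conditionally negative definite: for finitely many signed weights `f`
of total mass zero, `∑ a, ∑ b, f a * f b * |a - b| ≤ 0`. For `f = wX - wY` this is the
energy-distance inequality `E|X - X'| + E|Y - Y'| ≤ 2 E|X - Y|`, which the two strict inequalities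
contradict.

Negative definiteness follows by adding the points in increasing order while keeping the stronger
invariant `∑ a, ∑ b, f a * f b * |a - b| ≤ 2 (∑ a, f a) (∑ a, f a * (c - a))` for every
upper bound `c` of the support: adding a new maximum `m` is controlled by the invariant for the old
points at `c = m`, up to the slack `2 (∑ a, f a)² (c - m) ≥ 0`.
-/

open Finset

section NegativeDefinite

variable {R : Type*} [CommRing R] [LinearOrder R] [IsStrictOrderedRing R]

theorem sum_sum_mul_abs_sub_insert_of_lt {S : Finset R} {m : R} (hm : ∀ a ∈ S, a < m)
    (f : R → R) :
    ∑ a ∈ insert m S, ∑ b ∈ insert m S, f a * f b * |a - b| =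
      ∑ a ∈ S, ∑ b ∈ S, f a * f b * |a - b| + 2 * f m * ∑ a ∈ S, f a * (m - a) := by
  have hmS : m ∉ S := fun h => lt_irrefl m (hm m h)
  have habs : ∀ a ∈ S, |m - a| = m - a := fun a ha => abs_of_pos (sub_pos.mpr (hm a ha))
  have hrow : ∑ b ∈ insert m S, f m * f b * |m - b| = ∑ a ∈ S, f a * f m * (m - a) := by
    rw [sum_insert hmS, sub_self, abs_zero, mul_zero, zero_add]
    exact sum_congr rfl fun a ha => by rw [habs a ha]; ring
  have hcol : ∀ a ∈ S, ∑ b ∈ insert m S, f a * f b * |a - b| =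
      f a * f m * (m - a) + ∑ b ∈ S, f a * f b * |a - b| := fun a ha => by
    rw [sum_insert hmS, abs_sub_comm, habs a ha]
  rw [sum_insert hmS, hrow, sum_congr rfl hcol, sum_add_distrib, ← add_assoc, ← two_mul,
    add_comm, mul_sum, mul_sum]
  congr 1
  exact sum_congr rfl fun a _ => by ring

theorem sum_sum_mul_abs_sub_le (S : Finset R) (f : R → R) {c : R} (hc : ∀ a ∈ S, a ≤ c) :
    ∑ a ∈ S, ∑ b ∈ S, f a * f b * |a - b| ≤
      2 * (∑ a ∈ S, f a) * ∑ a ∈ S, f a * (c - a) := by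
  induction S using Finset.induction_on_max generalizing c with
  | empty => simp
  | insert m S hm ih =>
    have hmS : m ∉ S := fun h => lt_irrefl m (hm m h)
    have hle := ih fun a ha => (hm a ha).le
    have hshift : ∑ a ∈ S, f a * (c - a) =
        ∑ a ∈ S, f a * (m - a) + (∑ a ∈ S, f a) * (c - m) := by
      rw [sum_mul, ← sum_add_distrib]
      exact sum_congr rfl fun a _ => by ring
    have hslack : 0 ≤ (∑ a ∈ insert m S, f a) ^ 2 * (c - m) :=
      mul_nonneg (sq_nonneg _) (sub_nonneg.mpr (hc m (mem_insert_self m S)))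
    rw [sum_sum_mul_abs_sub_insert_of_lt hm, sum_insert hmS, sum_insert hmS, hshift]
    rw [sum_insert hmS] at hslack
    linear_combination hle + 2 * hslack

theorem sum_sum_mul_abs_sub_nonpos (S : Finset R) {f : R → R} (hf : ∑ a ∈ S, f a = 0) :
    ∑ a ∈ S, ∑ b ∈ S, f a * f b * |a - b| ≤ 0 := by
  obtain ⟨c, hc⟩ := S.bddAbove
  simpa [hf] using sum_sum_mul_abs_sub_le S f hc

end NegativeDefinite

theorem sum_sum_indicator_mul_indicator {ι R : Type*} [CommSemiring R] {U V T : Finset ι}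
    (hU : U ⊆ T) (hV : V ⊆ T) (u v : ι → R) (k : ι → ι → R) :
    ∑ a ∈ T, ∑ b ∈ T, (U : Set ι).indicator u a * (V : Set ι).indicator v b * k a b =
      ∑ a ∈ U, ∑ b ∈ V, u a * v b * k a b := by
  rw [sum_indicator_subset_of_eq_zero u
    (fun a x => ∑ b ∈ T, x * (V : Set ι).indicator v b * k a b) hU (by simp)]
  exact sum_congr rfl fun a _ =>
    sum_indicator_subset_of_eq_zero v (fun b y => u a * y * k a b) hV (by simp)

/-- There are no two finitely supported probability distributions on `ℝ` such that
the expected inner distance of each distribution strictly exceeds the expected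
crossing distance. -/
theorem no_L1_distribution_real :
    ¬ ∃ (SX SY : Finset ℝ) (wX wY : ℝ → ℝ),
      (∀ x ∈ SX, 0 ≤ wX x) ∧ (∀ y ∈ SY, 0 ≤ wY y) ∧
      (∑ x ∈ SX, wX x) = 1 ∧ (∑ y ∈ SY, wY y) = 1 ∧
      (∑ x₁ ∈ SX, ∑ x₂ ∈ SX, wX x₁ * wX x₂ * |x₁ - x₂|) >
        (∑ x ∈ SX, ∑ y ∈ SY, wX x * wY y * |x - y|) ∧
      (∑ y₁ ∈ SY, ∑ y₂ ∈ SY, wY y₁ * wY y₂ * |y₁ - y₂|) >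
        (∑ x ∈ SX, ∑ y ∈ SY, wX x * wY y * |x - y|) := by
  rintro ⟨SX, SY, wX, wY, -, -, hX1, hY1, hX, hY⟩
  have hXT : SX ⊆ SX ∪ SY := subset_union_left
  have hYT : SY ⊆ SX ∪ SY := subset_union_right
  set f : ℝ → ℝ := (SX : Set ℝ).indicator wX - (SY : Set ℝ).indicator wY
  have hf : ∑ a ∈ SX ∪ SY, f a = 0 := by
    simp only [f, Pi.sub_apply, sum_sub_distrib, sum_indicator_subset _ hXT,
      sum_indicator_subset _ hYT, hX1, hY1, sub_self]
  have henergy := sum_sum_mul_abs_sub_nonpos (SX ∪ SY) hf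
  simp only [f, Pi.sub_apply, sub_mul, mul_sub, sum_sub_distrib,
    sum_sum_indicator_mul_indicator hXT hXT, sum_sum_indicator_mul_indicator hXT hYT,
    sum_sum_indicator_mul_indicator hYT hXT, sum_sum_indicator_mul_indicator hYT hYT] at henergy
  have hswap : ∑ a ∈ SY, ∑ b ∈ SX, wY a * wX b * |a - b| =
      ∑ x ∈ SX, ∑ y ∈ SY, wX x * wY y * |x - y| := by
    rw [sum_comm]
    exact sum_congr rfl fun _ _ => sum_congr rfl fun _ _ => by rw [abs_sub_comm]; ring
  linarith
end

section
/- Let m ≥ 2 be an integer and α > 0 a real number. There do not exist sets A, B ⊆ ℝ^d, each of cardinality m, such that (i) for any two distinct points u, v both in A or both in B, ‖u−v‖₁ ≥ (m/(m−1))·α, and (ii) for any u ∈ A and v ∈ B, ‖u−v‖₁ < α. -/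
/-!
The `ℓ¹` distance is of negative type: `∑ i, ∑ j, c i * c j * ‖x i - x j‖₁ ≤ 0` whenever
`∑ i, c i = 0`. Coordinatewise this follows from `|a - b| = a + b - 2 * min a b`, since the
kernel `min` is positive semidefinite on `[0, ∞)`. With weights `1` on `A` and `-1` on `B` it gives
`Σ_{A×A} + Σ_{B×B} ≤ 2 Σ_{A×B}`; but the hypotheses make each inner sum at least
`m (m - 1) · m / (m - 1) · α = m² α` and the crossing sum less than `m² α`.
-/

open Finset

theorem sum_sum_mul_min_nonneg {ι : Type*} (s : Finset ι) (c x : ι → ℝ)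
    (hx : ∀ i ∈ s, 0 ≤ x i) :
    0 ≤ ∑ i ∈ s, ∑ j ∈ s, c i * c j * min (x i) (x j) := by
  classical
  induction s using Finset.strongInduction generalizing x with
  | H s ih =>
  rcases s.eq_empty_or_nonempty with rfl | hs
  · simp
  -- Subtracting the minimum value `x k` splits off `x k * (∑ c)²` and leaves a kernel
  -- that vanishes at `k`.
  obtain ⟨k, hk, hmin⟩ := s.exists_min_image x hs
  set y : ι → ℝ := fun i => x i - x k
  have hy : ∀ i ∈ s, 0 ≤ y i := fun i hi => sub_nonneg.2 (hmin i hi)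
  have hyk : y k = 0 := sub_self _
  have hsplit : ∑ i ∈ s, ∑ j ∈ s, c i * c j * min (x i) (x j)
      = x k * (∑ i ∈ s, c i) ^ 2 + ∑ i ∈ s, ∑ j ∈ s, c i * c j * min (y i) (y j) := by
    rw [sq, sum_mul_sum, mul_sum, ← sum_add_distrib]
    refine sum_congr rfl fun i _ => ?_
    rw [mul_sum, ← sum_add_distrib]
    refine sum_congr rfl fun j _ => ?_
    simp only [y, min_sub_sub_right]
    ring
  have hdrop : ∑ i ∈ s, ∑ j ∈ s, c i * c j * min (y i) (y j)
      = ∑ i ∈ s.erase k, ∑ j ∈ s.erase k, c i * c j * min (y i) (y j) := by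
    rw [← sum_erase s (a := k) (f := fun i => ∑ j ∈ s, c i * c j * min (y i) (y j))
      (sum_eq_zero fun j hj => by simp [hyk, min_eq_left (hy j hj)])]
    refine sum_congr rfl fun i hi => (sum_erase s ?_).symm
    simp [hyk, min_eq_right (hy i (mem_of_mem_erase hi))]
  rw [hsplit, hdrop]
  have hrest := ih (s.erase k) (erase_ssubset hk) y fun i hi => hy i (mem_of_mem_erase hi)
  have hxk := hx k hk
  positivity

theorem sum_sum_mul_abs_sub_nonpos_s2 {ι : Type*} (s : Finset ι) (c x : ι → ℝ)
    (hc : ∑ i ∈ s, c i = 0) :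
    ∑ i ∈ s, ∑ j ∈ s, c i * c j * |x i - x j| ≤ 0 := by
  classical
  obtain ⟨L, hL⟩ := (s.image x).bddBelow
  set y : ι → ℝ := fun i => x i - L
  have hy : ∀ i ∈ s, 0 ≤ y i := fun i hi => sub_nonneg.2 (hL (mem_image_of_mem x hi))
  have habs : ∀ i j, |x i - x j| = y i + y j - 2 * min (y i) (y j) := fun i j => by
    rw [← sub_sub_sub_cancel_right (x i) (x j) L, ← max_sub_min_eq_abs']
    linarith [min_add_max (y i) (y j)]
  calc ∑ i ∈ s, ∑ j ∈ s, c i * c j * |x i - x j|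
      = ∑ i ∈ s, ∑ j ∈ s, (c i * y i * c j + c i * (c j * y j)
          - 2 * (c i * c j * min (y i) (y j))) := by
        simp only [habs]
        exact sum_congr rfl fun i _ => sum_congr rfl fun j _ => by ring
    _ = (∑ i ∈ s, c i * y i) * (∑ i ∈ s, c i) + (∑ i ∈ s, c i) * (∑ i ∈ s, c i * y i)
          - 2 * ∑ i ∈ s, ∑ j ∈ s, c i * c j * min (y i) (y j) := by
        simp only [sum_add_distrib, sum_sub_distrib, ← mul_sum, ← sum_mul]
    _ ≤ 0 := by
      rw [hc]
      linarith [sum_sum_mul_min_nonneg s c y hy]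

theorem sum_sum_mul_sum_abs_sub_nonpos {ι κ : Type*} [Fintype κ] (s : Finset ι) (c : ι → ℝ)
    (x : ι → κ → ℝ) (hc : ∑ i ∈ s, c i = 0) :
    ∑ i ∈ s, ∑ j ∈ s, c i * c j * ∑ k, |x i k - x j k| ≤ 0 := by
  calc ∑ i ∈ s, ∑ j ∈ s, c i * c j * ∑ k, |x i k - x j k|
      = ∑ k, ∑ i ∈ s, ∑ j ∈ s, c i * c j * |x i k - x j k| := by
        simp only [mul_sum]
        exact (sum_congr rfl fun i _ => sum_comm).trans sum_comm
    _ ≤ 0 := sum_nonpos fun k _ => sum_sum_mul_abs_sub_nonpos_s2 s c (fun i => x i k) hc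

theorem sum_sum_l1_add_sum_sum_l1_le_two_mul_sum_sum_l1 {κ : Type*} [Fintype κ]
    (A B : Finset (κ → ℝ)) (hAB : #A = #B) :
    ∑ u ∈ A, ∑ v ∈ A, ∑ k, |u k - v k| + ∑ u ∈ B, ∑ v ∈ B, ∑ k, |u k - v k|
      ≤ 2 * ∑ u ∈ A, ∑ v ∈ B, ∑ k, |u k - v k| := by
  have h := sum_sum_mul_sum_abs_sub_nonpos (A.disjSum B) (Sum.elim 1 (-1)) (Sum.elim id id)
    (by simp [sum_disjSum, hAB])
  have hBA : ∑ u ∈ B, ∑ v ∈ A, ∑ k, |u k - v k| = ∑ u ∈ A, ∑ v ∈ B, ∑ k, |u k - v k| := by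
    rw [sum_comm]
    exact sum_congr rfl fun u _ => sum_congr rfl fun v _ => sum_congr rfl fun k _ =>
      abs_sub_comm _ _
  simp only [sum_disjSum, Sum.elim_inl, Sum.elim_inr, Pi.one_apply, Pi.neg_apply, id,
    one_mul, neg_mul, mul_neg, sum_neg_distrib, sum_add_distrib] at h
  linarith

theorem card_mul_card_sub_one_mul_le_sum_sum {α : Type*} (S : Finset α) (f : α → α → ℝ)
    (β : ℝ) (hdiag : ∀ u ∈ S, 0 ≤ f u u) (hoff : ∀ u ∈ S, ∀ v ∈ S, u ≠ v → β ≤ f u v) :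
    #S * (#S - 1 : ℝ) * β ≤ ∑ u ∈ S, ∑ v ∈ S, f u v := by
  classical
  have hcard : (#S.offDiag : ℝ) = #S * (#S - 1 : ℝ) := by
    rw [offDiag_card, Nat.cast_sub (Nat.le_mul_self _)]
    push_cast
    ring
  rw [← sum_product' (f := f), ← diag_union_offDiag, sum_union (disjoint_diag_offDiag S),
    ← hcard]
  have h1 : 0 ≤ ∑ p ∈ S.diag, f p.1 p.2 := sum_nonneg fun p hp => by
    rw [mem_diag] at hp
    rw [← hp.2]
    exact hdiag _ hp.1
  have h2 := card_nsmul_le_sum S.offDiag (fun p => f p.1 p.2) β fun p hp => by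
    rw [mem_offDiag] at hp
    exact hoff _ hp.1 _ hp.2.1 hp.2.2
  rw [nsmul_eq_mul] at h2
  linarith

theorem sum_sum_lt_card_mul_card_mul {α : Type*} {A B : Finset α} (hA : A.Nonempty)
    (hB : B.Nonempty) (f : α → α → ℝ) (γ : ℝ) (hf : ∀ u ∈ A, ∀ v ∈ B, f u v < γ) :
    ∑ u ∈ A, ∑ v ∈ B, f u v < #A * #B * γ := by
  rw [← sum_product' (f := f)]
  calc ∑ p ∈ A ×ˢ B, f p.1 p.2 < ∑ p ∈ A ×ˢ B, γ :=
        sum_lt_sum_of_nonempty (hA.product hB) fun p hp =>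
          hf _ (mem_product.1 hp).1 _ (mem_product.1 hp).2
    _ = #A * #B * γ := by simp

theorem no_polar_pair_L1_large_gap_general (d m : ℕ) (hm : 2 ≤ m) (α : ℝ) :
    ¬ ∃ A B : Finset (Fin d → ℝ),
      A.card = m ∧ B.card = m ∧
      (∀ u ∈ A, ∀ v ∈ A, u ≠ v → (m : ℝ) / ((m : ℝ) - 1) * α ≤ ∑ i, |u i - v i|) ∧
      (∀ u ∈ B, ∀ v ∈ B, u ≠ v → (m : ℝ) / ((m : ℝ) - 1) * α ≤ ∑ i, |u i - v i|) ∧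
      (∀ u ∈ A, ∀ v ∈ B, (∑ i, |u i - v i|) < α) := by
  rintro ⟨A, B, hA, hB, hAA, hBB, hAB⟩
  have hm1 : (m : ℝ) - 1 ≠ 0 := by
    have : (2 : ℝ) ≤ m := by exact_mod_cast hm
    linarith
  have hgap : (m : ℝ) * (m - 1) * ((m : ℝ) / (m - 1) * α) = m * m * α := by
    field_simp
  have hdiag (S : Finset (Fin d → ℝ)) : ∀ u ∈ S, 0 ≤ ∑ i, |u i - u i| := fun u _ => by simp
  have hinnerA := card_mul_card_sub_one_mul_le_sum_sum A _ _ (hdiag A) hAA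
  have hinnerB := card_mul_card_sub_one_mul_le_sum_sum B _ _ (hdiag B) hBB
  rw [hA, hgap] at hinnerA
  rw [hB, hgap] at hinnerB
  have hcross := sum_sum_lt_card_mul_card_mul (card_pos.1 (by omega)) (card_pos.1 (by omega))
    _ _ hAB
  rw [hA, hB] at hcross
  linarith [sum_sum_l1_add_sum_sum_l1_le_two_mul_sum_sum_l1 A B (hA.trans hB.symm)]

/-- No polar-pair of point-sets in `L^1` with large gap: there do not exist sets
`A, B ⊆ ℝ^d` of cardinality `m ≥ 2` each such that all inner pairs are at `ℓ1`-distance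
at least `(m/(m-1))·α` while all crossing pairs are at `ℓ1`-distance less than `α`. -/
theorem no_polar_pair_L1_large_gap (d m : ℕ) (hm : 2 ≤ m) (α : ℝ) (hα : 0 < α) :
    ¬ ∃ A B : Finset (Fin d → ℝ),
      A.card = m ∧ B.card = m ∧
      (∀ u ∈ A, ∀ v ∈ A, u ≠ v → (m : ℝ) / ((m : ℝ) - 1) * α ≤ ∑ i, |u i - v i|) ∧
      (∀ u ∈ B, ∀ v ∈ B, u ≠ v → (m : ℝ) / ((m : ℝ) - 1) * α ≤ ∑ i, |u i - v i|) ∧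
      (∀ u ∈ A, ∀ v ∈ B, (∑ i, |u i - v i|) < α) :=
  no_polar_pair_L1_large_gap_general d m hm α
end

section
/- Let α > β ≥ 0 be real numbers. For any dimension d, there do not exist finitely supported probability distributions 𝒜 and ℬ on ℝ^d such that E_{x,x'∼𝒜}[‖x−x'‖₀] ≥ α, E_{y,y'∼ℬ}[‖y−y'‖₀] ≥ α, and E_{x∼𝒜, y∼ℬ}[‖x−y‖₀] ≤ β, where in each expectation the samples are drawn independently. -/
/-!
Hamming distance is a sum over coordinates of the discrete metric `1 - [a = b]`, and the
equality kernel `[a = b]` is positive semidefinite: for weights `w`, `u` with pushforward masses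
`p`, `q` on the values of a coordinate, the three expectations of `[a = b]` are `∑ p²`, `∑ q²`
and `∑ p q`, so `∑ (p - q)² ≥ 0` gives `E[d(A,A')] + E[d(B,B')] ≤ 2 E[d(A,B)]` (Hamming distance
is of negative type). Hence `2α ≤ 2β`.
-/

open Finset

section EqualityKernel

variable {X V : Type*} [DecidableEq V] (f : X → V)

lemma sum_sum_mul_ite_eq_eq_sum_mul_fiber (S T : Finset X) (w u : X → ℝ) (Y : Finset V)
    (hS : ∀ x ∈ S, f x ∈ Y) :
    ∑ x ∈ S, ∑ y ∈ T, w x * u y * (if f x = f y then 1 else 0)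
      = ∑ v ∈ Y, (∑ x ∈ S with f x = v, w x) * ∑ y ∈ T with f y = v, u y := by
  symm
  calc ∑ v ∈ Y, (∑ x ∈ S with f x = v, w x) * ∑ y ∈ T with f y = v, u y
      = ∑ v ∈ Y, ∑ x ∈ S with f x = v, w x * ∑ y ∈ T with f y = f x, u y := by
        refine sum_congr rfl fun v _ => ?_
        rw [sum_mul]
        refine sum_congr rfl fun x hx => ?_
        rw [(mem_filter.1 hx).2]
    _ = ∑ x ∈ S, w x * ∑ y ∈ T with f y = f x, u y := sum_fiberwise_of_maps_to hS _
    _ = ∑ x ∈ S, ∑ y ∈ T, w x * u y * (if f x = f y then 1 else 0) := by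
        refine sum_congr rfl fun x _ => ?_
        rw [mul_sum, sum_filter]
        refine sum_congr rfl fun y _ => ?_
        split_ifs <;> simp_all [eq_comm]

lemma two_mul_sum_sum_ite_eq_le (S T : Finset X) (w u : X → ℝ) :
    2 * ∑ x ∈ S, ∑ y ∈ T, w x * u y * (if f x = f y then 1 else 0)
      ≤ ∑ x ∈ S, ∑ x' ∈ S, w x * w x' * (if f x = f x' then 1 else 0)
        + ∑ y ∈ T, ∑ y' ∈ T, u y * u y' * (if f y = f y' then 1 else 0) := by
  set Y := S.image f ∪ T.image f
  have hS : ∀ x ∈ S, f x ∈ Y := fun x hx => mem_union_left _ (mem_image_of_mem f hx)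
  have hT : ∀ y ∈ T, f y ∈ Y := fun y hy => mem_union_right _ (mem_image_of_mem f hy)
  rw [sum_sum_mul_ite_eq_eq_sum_mul_fiber f S T w u Y hS,
    sum_sum_mul_ite_eq_eq_sum_mul_fiber f S S w w Y hS,
    sum_sum_mul_ite_eq_eq_sum_mul_fiber f T T u u Y hT, mul_sum, ← sum_add_distrib]
  refine sum_le_sum fun v _ => ?_
  nlinarith [sq_nonneg ((∑ x ∈ S with f x = v, w x) - ∑ y ∈ T with f y = v, u y)]

end EqualityKernel

section Hamming

variable {ι : Type*} [Fintype ι] {β : ι → Type*} [∀ i, DecidableEq (β i)]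

lemma hammingDist_eq_sum_one_sub_ite (x y : ∀ i, β i) :
    (hammingDist x y : ℝ) = ∑ i, (1 - if x i = y i then 1 else 0) := by
  rw [hammingDist, card_filter]
  push_cast
  exact sum_congr rfl fun i _ => by split_ifs <;> simp_all

lemma sum_sum_mul_hammingDist (S T : Finset (∀ i, β i)) (w u : (∀ i, β i) → ℝ)
    (hw : ∑ x ∈ S, w x = 1) (hu : ∑ y ∈ T, u y = 1) :
    ∑ x ∈ S, ∑ y ∈ T, w x * u y * (hammingDist x y : ℝ)
      = ∑ i, (1 - ∑ x ∈ S, ∑ y ∈ T, w x * u y * if x i = y i then 1 else 0) := by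
  have hwu : ∑ x ∈ S, ∑ y ∈ T, w x * u y = 1 := by rw [← sum_mul_sum, hw, hu, one_mul]
  calc ∑ x ∈ S, ∑ y ∈ T, w x * u y * (hammingDist x y : ℝ)
      = ∑ x ∈ S, ∑ y ∈ T, ∑ i, w x * u y * (1 - if x i = y i then 1 else 0) := by
        simp only [hammingDist_eq_sum_one_sub_ite, mul_sum]
    _ = ∑ i, ∑ x ∈ S, ∑ y ∈ T, w x * u y * (1 - if x i = y i then 1 else 0) :=
        (sum_congr rfl fun _ _ => sum_comm).trans sum_comm
    _ = ∑ i, (1 - ∑ x ∈ S, ∑ y ∈ T, w x * u y * if x i = y i then 1 else 0) := by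
        simp only [mul_sub, mul_one, sum_sub_distrib, hwu]

lemma sum_sum_mul_hammingDist_add_le (S T : Finset (∀ i, β i)) (w u : (∀ i, β i) → ℝ)
    (hw : ∑ x ∈ S, w x = 1) (hu : ∑ y ∈ T, u y = 1) :
    ∑ x ∈ S, ∑ x' ∈ S, w x * w x' * (hammingDist x x' : ℝ)
      + ∑ y ∈ T, ∑ y' ∈ T, u y * u y' * (hammingDist y y' : ℝ)
      ≤ 2 * ∑ x ∈ S, ∑ y ∈ T, w x * u y * (hammingDist x y : ℝ) := by
  rw [sum_sum_mul_hammingDist S S w w hw hw, sum_sum_mul_hammingDist T T u u hu hu,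
    sum_sum_mul_hammingDist S T w u hw hu, mul_sum, ← sum_add_distrib]
  exact sum_le_sum fun i _ => by linarith [two_mul_sum_sum_ite_eq_le (fun x => x i) S T w u]

end Hamming

theorem no_distribution_for_L0_general (α β : ℝ) (hαβ : β < α) (d : ℕ) :
    ¬ ∃ (SA SB : Finset (Fin d → ℝ)) (wA wB : (Fin d → ℝ) → ℝ),
      (∀ x ∈ SA, 0 ≤ wA x) ∧ (∀ y ∈ SB, 0 ≤ wB y) ∧
      (∑ x ∈ SA, wA x) = 1 ∧ (∑ y ∈ SB, wB y) = 1 ∧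
      α ≤ (∑ x ∈ SA, ∑ x' ∈ SA, wA x * wA x' * (hammingDist x x' : ℝ)) ∧
      α ≤ (∑ y ∈ SB, ∑ y' ∈ SB, wB y * wB y' * (hammingDist y y' : ℝ)) ∧
      (∑ x ∈ SA, ∑ y ∈ SB, wA x * wB y * (hammingDist x y : ℝ)) ≤ β := by
  rintro ⟨SA, SB, wA, wB, -, -, hA, hB, hAA, hBB, hAB⟩
  linarith [sum_sum_mul_hammingDist_add_le SA SB wA wB hA hB]

/-- No distribution for `L^0`: for reals `α > β ≥ 0` and any dimension `d`, there are no
finitely supported probability distributions `𝒜, ℬ` on `ℝ^d` whose expected inner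
Hamming distances are at least `α` while the expected crossing Hamming distance
is at most `β`. -/
theorem no_distribution_for_L0 (α β : ℝ) (hβ : 0 ≤ β) (hαβ : β < α) (d : ℕ) :
    ¬ ∃ (SA SB : Finset (Fin d → ℝ)) (wA wB : (Fin d → ℝ) → ℝ),
      (∀ x ∈ SA, 0 ≤ wA x) ∧ (∀ y ∈ SB, 0 ≤ wB y) ∧
      (∑ x ∈ SA, wA x) = 1 ∧ (∑ y ∈ SB, wB y) = 1 ∧
      α ≤ (∑ x ∈ SA, ∑ x' ∈ SA, wA x * wA x' * (hammingDist x x' : ℝ)) ∧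
      α ≤ (∑ y ∈ SB, ∑ y' ∈ SB, wB y * wB y' * (hammingDist y y' : ℝ)) ∧
      (∑ x ∈ SA, ∑ y ∈ SB, wA x * wB y * (hammingDist x y : ℝ)) ≤ β :=
  no_distribution_for_L0_general α β hαβ d
end

section
/- For every integer n > 0, there exist sets A, B ⊆ ℝ^n, each of cardinality n, such that (i) for any two distinct a, a' ∈ A, ‖a−a'‖₀ = n, (ii) for any two distinct b, b' ∈ B, ‖b−b'‖₀ = n, and (iii) for any a ∈ A and b ∈ B, ‖a−b‖₀ = n−1. -/
/-!
Index the coordinates by a finite additive group `G`. The constant vectors `fun _ => k` are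
pairwise different in every coordinate, and so are the translates `fun i => i + k`; a constant
`k` and a translate `· + m` agree exactly at the coordinate `i = k - m`. Composing with an
injection `G ↪ ℝ` preserves Hamming distances, and `G = Fin n` gives the theorem.
-/

open Finset Function

theorem hammingDist_eq_card_of_forall_ne {ι : Type*} [Fintype ι] {β : ι → Type*}
    [∀ i, DecidableEq (β i)] {x y : ∀ i, β i} (h : ∀ i, x i ≠ y i) :
    hammingDist x y = Fintype.card ι := by
  rw [hammingDist, filter_true_of_mem fun i _ => h i, card_univ]

theorem hammingDist_const_const {ι β : Type*} [Fintype ι] [DecidableEq β] {k k' : β}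
    (h : k ≠ k') : hammingDist (fun _ : ι => k) (fun _ => k') = Fintype.card ι :=
  hammingDist_eq_card_of_forall_ne fun _ => h

section AddGroup

variable {G : Type*} [AddGroup G] [Fintype G] [DecidableEq G]

theorem hammingDist_add_right_add_right {k k' : G} (h : k ≠ k') :
    hammingDist (· + k) (· + k') = Fintype.card G :=
  hammingDist_eq_card_of_forall_ne fun _ => (add_right_injective _).ne h

theorem hammingDist_const_add_right (k m : G) :
    hammingDist (fun _ : G => k) (· + m) = Fintype.card G - 1 := by
  have disagree : univ.filter (fun i => k ≠ i + m) = univ.erase (k - m) := by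
    ext i
    simp [eq_sub_iff_add_eq, eq_comm]
  rw [hammingDist, disagree, card_erase_of_mem (mem_univ _), card_univ]

theorem exists_hammingDist_constants_translates {γ : Type*} [DecidableEq γ] (φ : G → γ)
    (hφ : Injective φ) :
    ∃ A B : Finset (G → γ),
      A.card = Fintype.card G ∧ B.card = Fintype.card G ∧
      (∀ a ∈ A, ∀ a' ∈ A, a ≠ a' → hammingDist a a' = Fintype.card G) ∧
      (∀ b ∈ B, ∀ b' ∈ B, b ≠ b' → hammingDist b b' = Fintype.card G) ∧
      (∀ a ∈ A, ∀ b ∈ B, hammingDist a b = Fintype.card G - 1) := by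
  let embed : (G → G) → (G → γ) := fun x i => φ (x i)
  have hammingDist_embed (x y : G → G) : hammingDist (embed x) (embed y) = hammingDist x y :=
    hammingDist_comp (fun _ => φ) fun _ => hφ
  let const (k : G) : G → γ := embed fun _ => k
  let translate (k : G) : G → γ := embed (· + k)
  have const_injective : Injective const := fun k k' h => hφ (congrFun h k)
  have translate_injective : Injective translate := fun k k' h =>
    add_left_cancel (hφ (congrFun h k))
  refine ⟨univ.image const, univ.image translate, ?_, ?_, ?_, ?_, ?_⟩
  · rw [card_image_of_injective _ const_injective, card_univ]
  · rw [card_image_of_injective _ translate_injective, card_univ]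
  · simp only [mem_image, mem_univ, true_and]
    rintro _ ⟨k, rfl⟩ _ ⟨k', rfl⟩ hne
    exact (hammingDist_embed _ _).trans (hammingDist_const_const fun h => hne (h ▸ rfl))
  · simp only [mem_image, mem_univ, true_and]
    rintro _ ⟨k, rfl⟩ _ ⟨k', rfl⟩ hne
    exact (hammingDist_embed _ _).trans
      (hammingDist_add_right_add_right fun h => hne (h ▸ rfl))
  · simp only [mem_image, mem_univ, true_and]
    rintro _ ⟨k, rfl⟩ _ ⟨m, rfl⟩
    exact (hammingDist_embed _ _).trans (hammingDist_const_add_right k m)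

end AddGroup

/-- Upper bound for `L^0` with arbitrary alphabet: for every `n > 0` there are sets
`A, B ⊆ ℝ^n` of `n` points each such that all distinct inner pairs are at Hamming
distance exactly `n` and all crossing pairs are at Hamming distance exactly `n - 1`. -/
theorem L0_upper_bound (n : ℕ) (hn : 0 < n) :
    ∃ A B : Finset (Fin n → ℝ),
      A.card = n ∧ B.card = n ∧
      (∀ a ∈ A, ∀ a' ∈ A, a ≠ a' → hammingDist a a' = n) ∧
      (∀ b ∈ B, ∀ b' ∈ B, b ≠ b' → hammingDist b b' = n) ∧
      (∀ a ∈ A, ∀ b ∈ B, hammingDist a b = n - 1) := by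
  have : NeZero n := ⟨hn.ne'⟩
  simpa only [Fintype.card_fin] using
    exists_hammingDist_constants_translates (G := Fin n) (fun k => (k : ℝ))
      (Nat.cast_injective.comp Fin.val_injective)
end

section
/- For every integer n > 0, there exist sets A, B ⊆ {0,1}^{n²}, each of cardinality n, such that (i) for any two distinct a, a' ∈ A, ‖a−a'‖₀ = 2n, (ii) for any two distinct b, b' ∈ B, ‖b−b'‖₀ = 2n, and (iii) for any a ∈ A and b ∈ B, ‖a−b‖₀ = 2(n−1). -/
open Finset
open scoped symmDiff

/-! Index the `n²` coordinates by the cells of an `n × n` grid and take for `A` the indicator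
vectors of the rows and for `B` those of the columns. The Hamming distance between indicator
vectors is the size of the symmetric difference of the sets: two rows are disjoint, giving `2n`,
while a row and a column meet in exactly one cell, giving `n + n - 2`. -/

theorem Finset.card_symmDiff_add_two_mul_card_inter {α : Type*} [DecidableEq α] (s t : Finset α) :
    #(s ∆ t) + 2 * #(s ∩ t) = #s + #t := by
  have hsub : #(s ∩ t) ≤ #(s ∪ t) := card_le_card inter_subset_union
  rw [symmDiff_eq_sup_sdiff_inf, sup_eq_union, inf_eq_inter,
    card_sdiff_of_subset inter_subset_union]
  have := card_union_add_card_inter s t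
  omega

section IndicatorVector

variable {ι M : Type*} [DecidableEq ι]

def indicatorVec [Zero M] [One M] (s : Finset ι) (x : ι) : M := if x ∈ s then 1 else 0

theorem hammingDist_indicatorVec [Fintype ι] [Zero M] [One M] [NeZero (1 : M)] [DecidableEq M]
    (s t : Finset ι) : hammingDist (indicatorVec s : ι → M) (indicatorVec t) = #(s ∆ t) := by
  unfold hammingDist indicatorVec
  congr 1
  ext x
  by_cases hs : x ∈ s <;> by_cases ht : x ∈ t <;> simp [hs, ht, mem_symmDiff]

end IndicatorVector

theorem hammingDist_comp_equiv {ι κ M : Type*} [Fintype ι] [Fintype κ] [DecidableEq M]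
    (e : κ ≃ ι) (x y : ι → M) : hammingDist (x ∘ e) (y ∘ e) = hammingDist x y := by
  simp only [hammingDist]
  exact card_equiv e (by simp)

theorem card_row_symmDiff_row {α β : Type*} [DecidableEq α] [DecidableEq β] [Fintype β]
    {i i' : α} (h : i ≠ i') :
    #(({i} ×ˢ univ : Finset (α × β)) ∆ ({i'} ×ˢ univ)) = 2 * Fintype.card β := by
  have := card_symmDiff_add_two_mul_card_inter ({i} ×ˢ univ : Finset (α × β)) ({i'} ×ˢ univ)
  rw [product_inter_product, singleton_inter_of_notMem (by simpa using h)] at this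
  simp only [card_product, card_singleton, card_univ, empty_product, card_empty] at this
  omega

theorem card_col_symmDiff_col {α β : Type*} [DecidableEq α] [DecidableEq β] [Fintype α]
    {j j' : β} (h : j ≠ j') :
    #((univ ×ˢ {j} : Finset (α × β)) ∆ (univ ×ˢ {j'})) = 2 * Fintype.card α := by
  have := card_symmDiff_add_two_mul_card_inter (univ ×ˢ {j} : Finset (α × β)) (univ ×ˢ {j'})
  rw [product_inter_product, singleton_inter_of_notMem (by simpa using h)] at this
  simp only [card_product, card_singleton, card_univ, product_empty, card_empty] at this
  omega

theorem card_row_symmDiff_col {α β : Type*} [DecidableEq α] [DecidableEq β] [Fintype α]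
    [Fintype β] (i : α) (j : β) :
    #(({i} ×ˢ univ : Finset (α × β)) ∆ (univ ×ˢ {j})) =
      Fintype.card α + Fintype.card β - 2 := by
  have := card_symmDiff_add_two_mul_card_inter ({i} ×ˢ univ : Finset (α × β)) (univ ×ˢ {j})
  rw [product_inter_product, inter_univ, univ_inter] at this
  simp only [card_product, card_singleton, card_univ, one_mul, mul_one] at this
  omega

theorem Function.injective_of_hammingDist_ne_zero {κ ι M : Type*} [Fintype ι] [DecidableEq M]
    {v : κ → ι → M} (h : ∀ k k', k ≠ k' → hammingDist (v k) (v k') ≠ 0) :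
    Function.Injective v := fun k k' hv =>
  by_contra fun hne => h k k' hne (by rw [hv, hammingDist_self])

theorem L0_upper_bound_binary_general (n : ℕ) :
    ∃ A B : Finset (Fin (n ^ 2) → Fin 2),
      A.card = n ∧ B.card = n ∧
      (∀ a ∈ A, ∀ a' ∈ A, a ≠ a' → hammingDist a a' = 2 * n) ∧
      (∀ b ∈ B, ∀ b' ∈ B, b ≠ b' → hammingDist b b' = 2 * n) ∧
      (∀ a ∈ A, ∀ b ∈ B, hammingDist a b = 2 * (n - 1)) := by
  let e : Fin (n ^ 2) ≃ Fin n × Fin n := (finCongr (sq n)).trans finProdFinEquiv.symm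
  let row (i : Fin n) : Fin (n ^ 2) → Fin 2 := indicatorVec ({i} ×ˢ univ) ∘ e
  let col (j : Fin n) : Fin (n ^ 2) → Fin 2 := indicatorVec (univ ×ˢ {j}) ∘ e
  have row_row {i i' : Fin n} (h : i ≠ i') : hammingDist (row i) (row i') = 2 * n := by
    rw [hammingDist_comp_equiv, hammingDist_indicatorVec, card_row_symmDiff_row h,
      Fintype.card_fin]
  have col_col {j j' : Fin n} (h : j ≠ j') : hammingDist (col j) (col j') = 2 * n := by
    rw [hammingDist_comp_equiv, hammingDist_indicatorVec, card_col_symmDiff_col h,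
      Fintype.card_fin]
  have row_col (i j : Fin n) : hammingDist (row i) (col j) = 2 * (n - 1) := by
    rw [hammingDist_comp_equiv, hammingDist_indicatorVec, card_row_symmDiff_col,
      Fintype.card_fin]
    omega
  have row_inj : Function.Injective row := Function.injective_of_hammingDist_ne_zero
    fun i i' h => by simp [row_row h, i.pos.ne']
  have col_inj : Function.Injective col := Function.injective_of_hammingDist_ne_zero
    fun j j' h => by simp [col_col h, j.pos.ne']
  refine ⟨univ.image row, univ.image col, ?_, ?_, ?_, ?_, ?_⟩
  · rw [card_image_of_injective _ row_inj, card_fin]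
  · rw [card_image_of_injective _ col_inj, card_fin]
  · simp only [forall_mem_image, mem_univ, forall_const]
    exact fun i i' hne => row_row (ne_of_apply_ne row hne)
  · simp only [forall_mem_image, mem_univ, forall_const]
    exact fun j j' hne => col_col (ne_of_apply_ne col hne)
  · simp only [forall_mem_image, mem_univ, forall_const]
    exact row_col

/-- Upper bound for `L^0` with binary vectors: for every `n > 0` there are sets
`A, B ⊆ {0,1}^{n²}` of `n` points each such that all distinct inner pairs are at Hamming
distance exactly `2n` and all crossing pairs are at Hamming distance exactly `2(n-1)`. -/
theorem L0_upper_bound_binary (n : ℕ) (hn : 0 < n) :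
    ∃ A B : Finset (Fin (n ^ 2) → Fin 2),
      A.card = n ∧ B.card = n ∧
      (∀ a ∈ A, ∀ a' ∈ A, a ≠ a' → hammingDist a a' = 2 * n) ∧
      (∀ b ∈ B, ∀ b' ∈ B, b ≠ b' → hammingDist b b' = 2 * n) ∧
      (∀ a ∈ A, ∀ b ∈ B, hammingDist a b = 2 * (n - 1)) :=
  L0_upper_bound_binary_general n
end

section
/- For every real p with 1 < p < 2 and every integer n ≥ 1, there exist sets A, B ⊆ ℝ^{2n}, each of cardinality n, such that (i) for any two distinct u, v ∈ A, ‖u−v‖_p = 2^{1/p}, (ii) for any two distinct u, v ∈ B, ‖u−v‖_p = 2^{1/p}, and (iii) for any u ∈ A and v ∈ B, ‖u−v‖_p < 2^{1/p}. -/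
/-!
Take the unit vectors `aᵢ = (eᵢ, 0)` and the vectors `bⱼ = (δ𝟙, eⱼ)` in `ℝⁿ × ℝⁿ`. Within each
family the `p`-th powers of the distances are `2`, while `‖aᵢ - bⱼ‖ₚᵖ = (1 - δ)ᵖ + (n - 1)δᵖ + 1`.
For `p > 1` we have `(1 - δ)ᵖ ≤ 1 - δ` and `δᵖ = o(δ)`, so a small `δ` makes this less than `2`.
-/

open Finset

theorem injective_of_sum_abs_sub_rpow_ne_zero {ι α : Type*} [Fintype α] {p : ℝ} (hp : p ≠ 0)
    {f : ι → α → ℝ} (hf : ∀ i j, i ≠ j → ∑ k, |f i k - f j k| ^ p ≠ 0) : f.Injective := by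
  intro i j hij
  by_contra hne
  exact hf i j hne (by simp [hij, Real.zero_rpow hp])

theorem exists_rpow_one_sub_add_mul_rpow_lt_one {p : ℝ} (hp : 1 < p) (N : ℕ) :
    ∃ δ : ℝ, 0 < δ ∧ δ ≤ 1 ∧ (1 - δ) ^ p + (N - 1) * δ ^ p < 1 := by
  set δ : ℝ := ((N : ℝ) + 1)⁻¹ ^ (p - 1)⁻¹
  have hδ0 : 0 < δ := by positivity
  have hδ1 : δ ≤ 1 :=
    Real.rpow_le_one (by positivity) (inv_le_one_of_one_le₀ (by simp)) (inv_nonneg.mpr (by linarith))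
  -- `δ` is chosen so that `δ ^ (p - 1) = 1 / (N + 1)`.
  have hδp : δ ^ p = δ / (N + 1) := by
    rw [← sub_add_cancel p 1, Real.rpow_add_one hδ0.ne', Real.rpow_inv_rpow (by positivity)
      (by linarith)]
    ring
  have hpow : (1 - δ) ^ p ≤ 1 - δ := Real.rpow_le_self_of_le_one (by linarith) (by linarith) hp.le
  have hsmall : (N - 1) * (δ / (N + 1)) < δ := by
    rw [mul_div_assoc', div_lt_iff₀ (by positivity)]
    nlinarith
  exact ⟨δ, hδ0, hδ1, by rw [hδp]; linarith⟩

section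

variable {ι : Type*} [Fintype ι] [DecidableEq ι] {p : ℝ}

theorem sum_abs_single_rpow (hp : p ≠ 0) (i : ι) : ∑ k, |(Pi.single i 1 : ι → ℝ) k| ^ p = 1 := by
  rw [Fintype.sum_eq_single i fun k hk => by simp [hk, Real.zero_rpow hp]]
  simp

theorem sum_abs_single_sub_single_rpow (hp : p ≠ 0) {i j : ι} (hij : i ≠ j) :
    ∑ k, |(Pi.single i 1 : ι → ℝ) k - (Pi.single j 1 : ι → ℝ) k| ^ p = 2 := by
  rw [Fintype.sum_eq_add i j hij fun k ⟨hki, hkj⟩ => by simp [hki, hkj, Real.zero_rpow hp]]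
  norm_num [hij, hij.symm]

theorem sum_abs_single_sub_const_rpow {δ : ℝ} (hδ0 : 0 ≤ δ) (hδ1 : δ ≤ 1) (i : ι) :
    ∑ k, |(Pi.single i 1 : ι → ℝ) k - δ| ^ p = (1 - δ) ^ p + (Fintype.card ι - 1) * δ ^ p := by
  have hrest : ∀ k ∈ univ.erase i, |(Pi.single i 1 : ι → ℝ) k - δ| ^ p = δ ^ p := fun k hk => by
    simp [ne_of_mem_erase hk, abs_of_nonneg hδ0]
  rw [← add_sum_erase _ _ (mem_univ i), sum_congr rfl hrest, sum_const, card_erase_of_mem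
    (mem_univ i), card_univ, nsmul_eq_mul, Nat.cast_sub (Fintype.card_pos_iff.mpr ⟨i⟩)]
  simp [abs_of_nonneg (sub_nonneg.mpr hδ1)]

def leftUnit (i : ι) : ι ⊕ ι → ℝ := Sum.elim (Pi.single i 1) 0

def shiftedRightUnit (δ : ℝ) (j : ι) : ι ⊕ ι → ℝ := Sum.elim (fun _ => δ) (Pi.single j 1)

theorem sum_abs_leftUnit_sub_rpow (hp : p ≠ 0) {i j : ι} (hij : i ≠ j) :
    ∑ k, |leftUnit i k - leftUnit j k| ^ p = 2 := by
  simp only [leftUnit, Fintype.sum_sum_type, Sum.elim_inl, Sum.elim_inr,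
    sum_abs_single_sub_single_rpow hp hij]
  simp [Real.zero_rpow hp]

theorem sum_abs_shiftedRightUnit_sub_rpow (hp : p ≠ 0) (δ : ℝ) {i j : ι} (hij : i ≠ j) :
    ∑ k, |shiftedRightUnit δ i k - shiftedRightUnit δ j k| ^ p = 2 := by
  simp only [shiftedRightUnit, Fintype.sum_sum_type, Sum.elim_inl, Sum.elim_inr,
    sum_abs_single_sub_single_rpow hp hij]
  simp [Real.zero_rpow hp]

theorem sum_abs_leftUnit_sub_shiftedRightUnit_rpow (hp : p ≠ 0) {δ : ℝ} (hδ0 : 0 ≤ δ)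
    (hδ1 : δ ≤ 1) (i j : ι) :
    ∑ k, |leftUnit i k - shiftedRightUnit δ j k| ^ p
      = (1 - δ) ^ p + (Fintype.card ι - 1) * δ ^ p + 1 := by
  simp only [leftUnit, shiftedRightUnit, Fintype.sum_sum_type, Sum.elim_inl, Sum.elim_inr,
    sum_abs_single_sub_const_rpow hδ0 hδ1, Pi.zero_apply, zero_sub, abs_neg,
    sum_abs_single_rpow hp]

theorem exists_finsets_sum_abs_sub_rpow_eq_two_and_lt_two (hp : 1 < p) :
    ∃ A B : Finset (ι ⊕ ι → ℝ), A.card = Fintype.card ι ∧ B.card = Fintype.card ι ∧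
      (∀ u ∈ A, ∀ v ∈ A, u ≠ v → ∑ k, |u k - v k| ^ p = 2) ∧
      (∀ u ∈ B, ∀ v ∈ B, u ≠ v → ∑ k, |u k - v k| ^ p = 2) ∧
      (∀ u ∈ A, ∀ v ∈ B, ∑ k, |u k - v k| ^ p < 2) := by
  have hp0 : p ≠ 0 := by positivity
  obtain ⟨δ, hδ0, hδ1, hδ⟩ := exists_rpow_one_sub_add_mul_rpow_lt_one hp (Fintype.card ι)
  have hAA : ∀ i j : ι, i ≠ j → ∑ k, |leftUnit i k - leftUnit j k| ^ p = 2 :=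
    fun _ _ => sum_abs_leftUnit_sub_rpow hp0
  have hBB : ∀ i j : ι, i ≠ j →
      ∑ k, |shiftedRightUnit δ i k - shiftedRightUnit δ j k| ^ p = 2 :=
    fun _ _ => sum_abs_shiftedRightUnit_sub_rpow hp0 δ
  let a : ι ↪ (ι ⊕ ι → ℝ) :=
    ⟨leftUnit, injective_of_sum_abs_sub_rpow_ne_zero hp0 fun i j hij => by simp [hAA i j hij]⟩
  let b : ι ↪ (ι ⊕ ι → ℝ) := ⟨shiftedRightUnit δ,
    injective_of_sum_abs_sub_rpow_ne_zero hp0 fun i j hij => by simp [hBB i j hij]⟩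
  refine ⟨univ.map a, univ.map b, by simp, by simp, ?_, ?_, ?_⟩
  · simp only [forall_mem_map, mem_univ, forall_const, a.injective.ne_iff]
    exact hAA
  · simp only [forall_mem_map, mem_univ, forall_const, b.injective.ne_iff]
    exact hBB
  · simp only [forall_mem_map, mem_univ, forall_const]
    exact fun i j =>
      (sum_abs_leftUnit_sub_shiftedRightUnit_rpow hp0 hδ0.le hδ1 i j).trans_lt (by linarith)

end

theorem Lp_upper_bound_between_one_and_two_general (p : ℝ) (hp1 : 1 < p) (n : ℕ) :
    ∃ A B : Finset (Fin (2 * n) → ℝ),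
      A.card = n ∧ B.card = n ∧
      (∀ u ∈ A, ∀ v ∈ A, u ≠ v →
        (∑ i, |u i - v i| ^ p) ^ (1 / p) = (2 : ℝ) ^ (1 / p)) ∧
      (∀ u ∈ B, ∀ v ∈ B, u ≠ v →
        (∑ i, |u i - v i| ^ p) ^ (1 / p) = (2 : ℝ) ^ (1 / p)) ∧
      (∀ u ∈ A, ∀ v ∈ B,
        (∑ i, |u i - v i| ^ p) ^ (1 / p) < (2 : ℝ) ^ (1 / p)) := by
  obtain ⟨A, B, hA, hB, hAA, hBB, hAB⟩ :=
    exists_finsets_sum_abs_sub_rpow_eq_two_and_lt_two (ι := Fin n) hp1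
  let σ : Fin n ⊕ Fin n ≃ Fin (2 * n) := finSumFinEquiv.trans (finCongr (two_mul n).symm)
  let e : (Fin n ⊕ Fin n → ℝ) ↪ (Fin (2 * n) → ℝ) := (σ.arrowCongr (Equiv.refl ℝ)).toEmbedding
  have he : ∀ u v, ∑ k, |e u k - e v k| ^ p = ∑ k, |u k - v k| ^ p := fun u v =>
    σ.symm.sum_comp fun k => |u k - v k| ^ p
  refine ⟨A.map e, B.map e, by simpa using hA, by simpa using hB, ?_, ?_, ?_⟩
  · simp only [forall_mem_map, e.injective.ne_iff, he]
    exact fun u hu v hv huv => by rw [hAA u hu v hv huv]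
  · simp only [forall_mem_map, e.injective.ne_iff, he]
    exact fun u hu v hv huv => by rw [hBB u hu v hv huv]
  · simp only [forall_mem_map, he]
    exact fun u hu v hv =>
      Real.rpow_lt_rpow (sum_nonneg fun _ _ => by positivity) (hAB u hu v hv) (by positivity)

/-- Upper bound for `L^p` with `1 < p < 2`: for every such `p` and every `n ≥ 1`,
there are sets `A, B ⊆ ℝ^{2n}` of cardinality `n` each such that all distinct inner pairs
are at `ℓp`-distance exactly `2^{1/p}` and all crossing pairs are at `ℓp`-distance
strictly less than `2^{1/p}`. -/
theorem Lp_upper_bound_between_one_and_two (p : ℝ) (hp1 : 1 < p) (hp2 : p < 2)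
    (n : ℕ) (hn : 1 ≤ n) :
    ∃ A B : Finset (Fin (2 * n) → ℝ),
      A.card = n ∧ B.card = n ∧
      (∀ u ∈ A, ∀ v ∈ A, u ≠ v →
        (∑ i, |u i - v i| ^ p) ^ (1 / p) = (2 : ℝ) ^ (1 / p)) ∧
      (∀ u ∈ B, ∀ v ∈ B, u ≠ v →
        (∑ i, |u i - v i| ^ p) ^ (1 / p) = (2 : ℝ) ^ (1 / p)) ∧
      (∀ u ∈ A, ∀ v ∈ B,
        (∑ i, |u i - v i| ^ p) ^ (1 / p) < (2 : ℝ) ^ (1 / p)) :=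
  Lp_upper_bound_between_one_and_two_general p hp1 n
end

section
/- Let p ≥ 1 be a real number, N and d positive integers, and let α > β ≥ 0 be real numbers. Suppose A, B ⊆ ℝ^d are sets each of cardinality N such that (i) for any two distinct u, v ∈ A, ‖u−v‖_p > α, (ii) for any two distinct u, v ∈ B, ‖u−v‖_p > α, and (iii) for every u ∈ A and v ∈ B, ‖u−v‖_p ≤ β. Then d ≥ log₅(N), i.e., N ≤ 5^d. -/
/-!
Put the points in `ℓ_p^d`. The open balls of radius `α/2` around the points of `A` are pairwise
disjoint, and all lie in the ball of radius `β + α/2` around any point of `B`. Comparing Haar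
volumes, which scale as the `d`-th power of the radius, gives `N (α/2)^d ≤ (β + α/2)^d ≤ (5α/2)^d`.
-/

open Finset MeasureTheory Metric Module

theorem card_mul_pow_le_of_pairwise_le_dist {E : Type*} [NormedAddCommGroup E]
    [NormedSpace ℝ E] [FiniteDimensional ℝ E] {A : Finset E} {c : E} {r R : ℝ}
    (hr : 0 < r) (hR : 0 ≤ R) (hA : (A : Set E).Pairwise fun u v => r ≤ dist u v)
    (hAc : ∀ u ∈ A, dist u c ≤ R) :
    A.card * (r / 2) ^ finrank ℝ E ≤ (R + r / 2) ^ finrank ℝ E := by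
  borelize E
  set μ : Measure E := Measure.addHaar
  have hdisj : (A : Set E).PairwiseDisjoint fun u => ball u (r / 2) :=
    fun u hu v hv huv => ball_disjoint_ball (by linarith [hA hu hv huv])
  have hsub : ⋃ u ∈ A, ball u (r / 2) ⊆ ball c (R + r / 2) := by
    simp only [Set.iUnion_subset_iff]
    exact fun u hu => ball_subset_ball' (by linarith [hAc u hu])
  have hvol : (A.card : ENNReal) * (ENNReal.ofReal ((r / 2) ^ finrank ℝ E) * μ (ball 0 1)) ≤
      ENNReal.ofReal ((R + r / 2) ^ finrank ℝ E) * μ (ball 0 1) := calc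
    _ = ∑ u ∈ A, μ (ball u (r / 2)) := by simp [μ.addHaar_ball_of_pos _ (half_pos hr)]
    _ = μ (⋃ u ∈ A, ball u (r / 2)) :=
      (measure_biUnion_finset hdisj fun _ _ => measurableSet_ball).symm
    _ ≤ μ (ball c (R + r / 2)) := measure_mono hsub
    _ = _ := μ.addHaar_ball_of_pos _ (by linarith)
  rwa [← mul_assoc, ENNReal.mul_le_mul_iff_left (measure_ball_pos μ 0 one_pos).ne'
    measure_ball_lt_top.ne, ← ENNReal.ofReal_natCast, ← ENNReal.ofReal_mul (by positivity),
    ENNReal.ofReal_le_ofReal_iff (by positivity)] at hvol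

theorem PiLp.dist_toLp_ofReal {ι : Type*} [Fintype ι] {p : ℝ} (hp : 0 < p) (u v : ι → ℝ) :
    dist (WithLp.toLp (ENNReal.ofReal p) u) (WithLp.toLp (ENNReal.ofReal p) v) =
      (∑ i, |u i - v i| ^ p) ^ (1 / p) := by
  rw [PiLp.dist_eq_sum (by rwa [ENNReal.toReal_ofReal hp.le]), ENNReal.toReal_ofReal hp.le]
  simp [Real.dist_eq]

theorem PiLp.finrank_fin_real (p : ENNReal) (d : ℕ) :
    finrank ℝ (PiLp p fun _ : Fin d => ℝ) = d :=
  (WithLp.linearEquiv p ℝ (Fin d → ℝ)).finrank_eq.trans (by simp)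

theorem Lp_sphericity_lower_bound_general (p : ℝ) (hp : 1 ≤ p) (N d : ℕ)
    (hN : 0 < N) (α β : ℝ) (hβ : 0 ≤ β) (hαβ : β < α)
    (A B : Finset (Fin d → ℝ)) (hA : A.card = N) (hB : B.card = N)
    (hAA : ∀ u ∈ A, ∀ v ∈ A, u ≠ v → α < (∑ i, |u i - v i| ^ p) ^ (1 / p))
    (hAB : ∀ u ∈ A, ∀ v ∈ B, (∑ i, |u i - v i| ^ p) ^ (1 / p) ≤ β) :
    N ≤ 5 ^ d := by
  have : Fact (1 ≤ ENNReal.ofReal p) := ⟨by simpa using hp⟩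
  set toLp := WithLp.toLp (ENNReal.ofReal p) (V := Fin d → ℝ)
  have hdist : ∀ u v, dist (toLp u) (toLp v) = (∑ i, |u i - v i| ^ p) ^ (1 / p) :=
    PiLp.dist_toLp_ofReal (by linarith)
  have hsep : (A.image toLp : Set (PiLp (ENNReal.ofReal p) fun _ : Fin d => ℝ)).Pairwise
      fun u v => α ≤ dist u v := by
    rw [coe_image, (WithLp.toLp_injective _).injOn.pairwise_image]
    exact fun u hu v hv huv => (hdist u v).ge.trans' (hAA u hu v hv huv).le
  have hα : 0 < α := hβ.trans_lt hαβ
  obtain ⟨b, hb⟩ := card_pos.mp (hB ▸ hN)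
  have hpack := card_mul_pow_le_of_pairwise_le_dist hα hβ hsep (c := toLp b)
    (by simpa [hdist] using fun u hu => hAB u hu b hb)
  rw [card_image_of_injective _ (WithLp.toLp_injective _), hA, PiLp.finrank_fin_real] at hpack
  have : (N : ℝ) * (α / 2) ^ d ≤ 5 ^ d * (α / 2) ^ d := calc
    _ ≤ (β + α / 2) ^ d := hpack
    _ ≤ (5 * (α / 2)) ^ d := by gcongr; linarith
    _ = _ := mul_pow ..
  exact_mod_cast le_of_mul_le_mul_right this (by positivity)

/-- Lower bound on the biclique sphericity in `L^p`: if `A, B ⊆ ℝ^d` each have `N` points,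
all distinct inner pairs are at `ℓp`-distance greater than `α`, and all crossing pairs are at
`ℓp`-distance at most `β`, where `α > β ≥ 0`, then `N ≤ 5^d`, i.e. `d ≥ log₅ N`. -/
theorem Lp_sphericity_lower_bound (p : ℝ) (hp : 1 ≤ p) (N d : ℕ)
    (hN : 0 < N) (hd : 0 < d) (α β : ℝ) (hβ : 0 ≤ β) (hαβ : β < α)
    (A B : Finset (Fin d → ℝ)) (hA : A.card = N) (hB : B.card = N)
    (hAA : ∀ u ∈ A, ∀ v ∈ A, u ≠ v → α < (∑ i, |u i - v i| ^ p) ^ (1 / p))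
    (hBB : ∀ u ∈ B, ∀ v ∈ B, u ≠ v → α < (∑ i, |u i - v i| ^ p) ^ (1 / p))
    (hAB : ∀ u ∈ A, ∀ v ∈ B, (∑ i, |u i - v i| ^ p) ^ (1 / p) ≤ β) :
    N ≤ 5 ^ d :=
  Lp_sphericity_lower_bound_general p hp N d hN α β hβ hαβ A B hA hB hAA hAB
end

section
/- Let p > 2 be a real number and δ a real number with 0 < δ < 1/4 − 1/2^p. Let C ⊆ {−1,1}^{d'} be a set of n vectors such that any two distinct vectors in C differ in at least (1/2 − δ)·d' coordinates. Let d = 2d', and define A = { (x, 0^{d'}) : x ∈ C } and B = { (0^{d'}, x) : x ∈ C }, both subsets of ℝ^d. Then, with ζ = 2^{p−3}: (i) for any two distinct u, u' ∈ A, ‖u−u'‖_p > ((ζ + 1/2)·d)^{1/p}; (ii) for any two distinct v, v' ∈ B, ‖v−v'‖_p > ((ζ + 1/2)·d)^{1/p}; and (iii) for every u ∈ A and v ∈ B, ‖u−v‖_p = d^{1/p}. -/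
/-!
For sign vectors `x, y ∈ {-1,1}^{d'}` every coordinate contributes `0` or `2^p` to
`‖x - y‖_p^p`, so `‖x - y‖_p^p = 2^p · dist_H(x, y)`, while `‖x‖_p^p = d'`. Since the two
halves of `(x, 0)` and `(0, y)` have disjoint supports, cross pairs are at `ℓp^p`-distance
`d' + d' = d`, and inner pairs at `2^p · dist_H(x, y) ≥ 2^p (1/2 - δ) d'`, which exceeds
`(2^{p-3} + 1/2) · 2d' = (2^p/4 + 1) d'` exactly when `2^p (1/4 - δ) > 1`.
-/

open Finset

lemma sum_abs_sub_rpow_append (p : ℝ) {m k : ℕ} (a c : Fin m → ℝ) (b e : Fin k → ℝ) :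
    ∑ i, |Fin.append a b i - Fin.append c e i| ^ p =
      ∑ i, |a i - c i| ^ p + ∑ i, |b i - e i| ^ p := by
  simp only [Fin.sum_univ_add, Fin.append_left, Fin.append_right]

lemma sum_abs_sub_rpow_self {p : ℝ} (hp : p ≠ 0) {m : ℕ} (a : Fin m → ℝ) :
    ∑ i, |a i - a i| ^ p = 0 := by
  simp [Real.zero_rpow hp]

section SignVectors

variable {p : ℝ} {m : ℕ} {x y : Fin m → ℝ}

lemma abs_sub_rpow_of_sign (hp : p ≠ 0) {a b : ℝ} (ha : a = -1 ∨ a = 1) (hb : b = -1 ∨ b = 1) :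
    |a - b| ^ p = if a = b then 0 else 2 ^ p := by
  rcases ha with rfl | rfl <;> rcases hb with rfl | rfl <;> norm_num [Real.zero_rpow hp]

lemma sum_abs_sub_rpow_of_sign (hp : p ≠ 0) (hx : ∀ i, x i = -1 ∨ x i = 1)
    (hy : ∀ i, y i = -1 ∨ y i = 1) :
    ∑ i, |x i - y i| ^ p = hammingDist x y * 2 ^ p := by
  classical
  simp only [abs_sub_rpow_of_sign hp (hx _) (hy _), sum_ite, sum_const_zero, zero_add,
    sum_const, nsmul_eq_mul, hammingDist]

lemma sum_abs_rpow_of_sign (hx : ∀ i, x i = -1 ∨ x i = 1) : ∑ i, |x i| ^ p = m := by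
  have hxi : ∀ i, |x i| = 1 := fun i => by rcases hx i with h | h <;> simp [h]
  simp [hxi]

end SignVectors

lemma mul_two_rpow_gt_of_hammingDist {p δ d h : ℝ} (hδ : δ < 1 / 4 - 1 / 2 ^ p) (hd : 0 < d)
    (hh : (1 / 2 - δ) * d ≤ h) : (2 ^ (p - 3) + 1 / 2) * (2 * d) < h * 2 ^ p := by
  have ht : (0 : ℝ) < 2 ^ p := by positivity
  have h8 : (2 : ℝ) ^ (p - 3) = 2 ^ p / 8 := by
    rw [Real.rpow_sub two_pos]; norm_num
  have hδt : δ * 2 ^ p < 2 ^ p / 4 - 1 := by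
    have := mul_lt_mul_of_pos_right hδ ht
    rw [sub_mul, one_div_mul_cancel ht.ne'] at this
    linarith
  rw [h8]
  nlinarith [mul_le_mul_of_nonneg_right hh ht.le]

theorem polar_pair_from_code_general (p : ℝ) (hp : 2 < p) (δ : ℝ)
    (hδ1 : δ < 1 / 4 - 1 / 2 ^ p) (d' : ℕ) (C : Finset (Fin d' → ℝ))
    (hCval : ∀ x ∈ C, ∀ i, x i = -1 ∨ x i = 1)
    (hCdist : ∀ x ∈ C, ∀ y ∈ C, x ≠ y → (1 / 2 - δ) * (d' : ℝ) ≤ (hammingDist x y : ℝ)) :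
    ∀ (ζ : ℝ), ζ = 2 ^ (p - 3) →
    ∀ A B : Finset (Fin (d' + d') → ℝ),
      A = C.image (fun x => Fin.append x (0 : Fin d' → ℝ)) →
      B = C.image (fun x => Fin.append (0 : Fin d' → ℝ) x) →
      (∀ u ∈ A, ∀ u' ∈ A, u ≠ u' →
        ((ζ + 1 / 2) * (2 * (d' : ℝ))) ^ (1 / p) < (∑ i, |u i - u' i| ^ p) ^ (1 / p)) ∧
      (∀ v ∈ B, ∀ v' ∈ B, v ≠ v' →
        ((ζ + 1 / 2) * (2 * (d' : ℝ))) ^ (1 / p) < (∑ i, |v i - v' i| ^ p) ^ (1 / p)) ∧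
      (∀ u ∈ A, ∀ v ∈ B,
        (∑ i, |u i - v i| ^ p) ^ (1 / p) = (2 * (d' : ℝ)) ^ (1 / p)) := by
  rintro ζ rfl A B rfl rfl
  have hp0 : p ≠ 0 := by positivity
  have inner : ∀ x ∈ C, ∀ y ∈ C, x ≠ y →
      ((2 ^ (p - 3) + 1 / 2) * (2 * (d' : ℝ))) ^ (1 / p) < (∑ i, |x i - y i| ^ p) ^ (1 / p) := by
    intro x hx y hy hxy
    have hd' : (0 : ℝ) < d' := by
      obtain ⟨i, -⟩ := Function.ne_iff.mp hxy
      exact_mod_cast i.pos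
    rw [sum_abs_sub_rpow_of_sign hp0 (hCval x hx) (hCval y hy)]
    exact Real.rpow_lt_rpow (by positivity)
      (mul_two_rpow_gt_of_hammingDist hδ1 hd' (hCdist x hx y hy hxy)) (by positivity)
  simp only [forall_mem_image]
  refine ⟨fun x hx y hy hxy => ?_, fun x hx y hy hxy => ?_, fun x hx y hy => ?_⟩
  · rw [sum_abs_sub_rpow_append, sum_abs_sub_rpow_self hp0, add_zero]
    exact inner x hx y hy fun h => hxy (h ▸ rfl)
  · rw [sum_abs_sub_rpow_append, sum_abs_sub_rpow_self hp0, zero_add]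
    exact inner x hx y hy fun h => hxy (h ▸ rfl)
  · simp only [sum_abs_sub_rpow_append, Pi.zero_apply, sub_zero, zero_sub, abs_neg,
      sum_abs_rpow_of_sign (hCval x hx), sum_abs_rpow_of_sign (hCval y hy)]
    ring_nf

/-- Code-based construction of a polar pair in `L^p` for `p > 2`: given a set `C` of `n`
vectors in `{-1,1}^{d'}` whose distinct pairs differ in at least `(1/2 - δ)·d'` coordinates,
where `0 < δ < 1/4 - 1/2^p`, the sets `A = {(x, 0^{d'}) : x ∈ C}` and
`B = {(0^{d'}, x) : x ∈ C}` in `ℝ^{2d'}` satisfy: inner pairs are at `ℓp`-distance more than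
`((ζ + 1/2)·d)^{1/p}` with `ζ = 2^{p-3}` and `d = 2d'`, while all crossing pairs are at
`ℓp`-distance exactly `d^{1/p}`. -/
theorem polar_pair_from_code (p : ℝ) (hp : 2 < p) (δ : ℝ) (hδ0 : 0 < δ)
    (hδ1 : δ < 1 / 4 - 1 / 2 ^ p) (d' n : ℕ) (C : Finset (Fin d' → ℝ))
    (hCcard : C.card = n)
    (hCval : ∀ x ∈ C, ∀ i, x i = -1 ∨ x i = 1)
    (hCdist : ∀ x ∈ C, ∀ y ∈ C, x ≠ y → (1 / 2 - δ) * (d' : ℝ) ≤ (hammingDist x y : ℝ)) :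
    ∀ (ζ : ℝ), ζ = 2 ^ (p - 3) →
    ∀ A B : Finset (Fin (d' + d') → ℝ),
      A = C.image (fun x => Fin.append x (0 : Fin d' → ℝ)) →
      B = C.image (fun x => Fin.append (0 : Fin d' → ℝ) x) →
      (∀ u ∈ A, ∀ u' ∈ A, u ≠ u' →
        ((ζ + 1 / 2) * (2 * (d' : ℝ))) ^ (1 / p) < (∑ i, |u i - u' i| ^ p) ^ (1 / p)) ∧
      (∀ v ∈ B, ∀ v' ∈ B, v ≠ v' →
        ((ζ + 1 / 2) * (2 * (d' : ℝ))) ^ (1 / p) < (∑ i, |v i - v' i| ^ p) ^ (1 / p)) ∧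
      (∀ u ∈ A, ∀ v ∈ B,
        (∑ i, |u i - v i| ^ p) ^ (1 / p) = (2 * (d' : ℝ)) ^ (1 / p)) :=
  polar_pair_from_code_general p hp δ hδ1 d' C hCval hCdist
end

section
/- For every real p > 2 there exists a constant c ≥ 1 such that for all sufficiently large integers n there exist sets A, B ⊆ ℝ^d, each of cardinality n, with d ≤ c·log₂(n), satisfying: (i) for any two distinct u, u' ∈ A, ‖u−u'‖_p > ((2^{p−3} + 1/2)·d)^{1/p}; (ii) for any two distinct v, v' ∈ B, ‖v−v'‖_p > ((2^{p−3} + 1/2)·d)^{1/p}; and (iii) for every u ∈ A and v ∈ B, ‖u−v‖_p = d^{1/p}. -/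
/-!
Take a binary code `S ⊆ {0,1}^m` with `n` words at pairwise Hamming distance more than
`α m`, where `α = 1/4 + 2^{-p} < 1/2`; by the greedy Gilbert–Varshamov argument and the
entropy bound `∑_{i ≤ α m} (m choose i) ≤ e^{m H(α)}` with `H(α) < log 2`, such codes exist
with `m = O(log n)`. Put `A = {(σ(a), 0)}` and `B = {(0, σ(b))}` in `ℝ^{2m}`, where `σ` maps a
word to its `±1` sign vector. Every crossing pair differs by `±1` in all `d = 2m` coordinates,
while two words of `A` (or of `B`) at Hamming distance `h` are at `ℓp`-distance `(2^p h)^{1/p}`,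
and `2^p α m = (2^{p-3} + 1/2) d`.
-/

open Finset Real

theorem card_hammingDist_le_le_sum_choose {ι : Type*} [Fintype ι] [DecidableEq ι]
    (x : ι → Bool) (r : ℕ) :
    #{y | hammingDist y x ≤ r} ≤ ∑ k ∈ range (r + 1), (Fintype.card ι).choose k := by
  let flipOn (s : Finset ι) : ι → Bool := fun i => if i ∈ s then !x i else x i
  have hsub : ({y | hammingDist y x ≤ r} : Finset (ι → Bool)) ⊆
      (range (r + 1)).biUnion fun k => (powersetCard k univ).image flipOn := by
    intro y hy
    rw [mem_filter] at hy
    refine mem_biUnion.2 ⟨hammingDist y x, mem_range.2 (Nat.lt_succ_of_le hy.2),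
      mem_image.2 ⟨({i | y i ≠ x i} : Finset ι),
        mem_powersetCard.2 ⟨subset_univ _, rfl⟩, ?_⟩⟩
    funext i
    by_cases h : y i = x i
    · simp [flipOn, h]
    · simpa [flipOn, h] using Bool.eq_not.2 (Ne.symm h)
  calc _ ≤ _ := card_le_card hsub
    _ ≤ ∑ k ∈ range (r + 1), #((powersetCard k univ).image flipOn) := card_biUnion_le
    _ ≤ _ := sum_le_sum fun k _ => card_image_le.trans_eq (by rw [card_powersetCard, card_univ])

theorem exists_card_eq_pairwise_not_of_card_le {α : Type*} [Fintype α] [DecidableEq α]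
    [Nonempty α] (R : α → α → Prop) [DecidableRel R] (hrefl : ∀ x, R x x)
    (hsymm : ∀ x y, R x y → R y x) {V : ℕ} (hV : ∀ x, #{y | R y x} ≤ V) {k : ℕ}
    (hk : k * V ≤ Fintype.card α) :
    ∃ S : Finset α, #S = k ∧ (S : Set α).Pairwise fun x y => ¬ R x y := by
  induction k with
  | zero => exact ⟨∅, by simp⟩
  | succ k ih =>
    obtain ⟨S, hcard, hS⟩ := ih (le_trans (Nat.mul_le_mul_right V k.le_succ) hk)
    have hV0 : 0 < V := by
      obtain ⟨x⟩ := ‹Nonempty α›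
      exact lt_of_lt_of_le (card_pos.2 ⟨x, by simp [hrefl x]⟩) (hV x)
    have hnear : #(S.biUnion fun x => {y | R y x}) < Fintype.card α :=
      calc _ ≤ ∑ x ∈ S, #{y | R y x} := card_biUnion_le
        _ ≤ #S * V := by simpa using sum_le_card_nsmul S _ V fun x _ => hV x
        _ < (k + 1) * V := by rw [hcard]; nlinarith
        _ ≤ _ := hk
    obtain ⟨z, -, hz⟩ := exists_mem_notMem_of_card_lt_card hnear
    simp only [mem_biUnion, mem_filter, mem_univ, true_and, not_exists, not_and] at hz
    refine ⟨insert z S, ?_, ?_⟩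
    · rw [card_insert_of_notMem fun hzS => hz z hzS (hrefl z), hcard]
    · rw [coe_insert, Set.pairwise_insert_of_notMem fun hzS => hz z hzS (hrefl z)]
      exact ⟨hS, fun x hx => ⟨hz x hx, fun h => hz x hx (hsymm _ _ h)⟩⟩

theorem sum_range_choose_mul_pow_le_one_add_pow {x : ℝ} (hx : 0 ≤ x) {m r : ℕ}
    (hrm : r ≤ m) :
    ∑ i ∈ range (r + 1), (m.choose i : ℝ) * x ^ i ≤ (1 + x) ^ m := by
  rw [add_comm 1 x, add_pow]
  refine (sum_le_sum_of_subset_of_nonneg (range_subset_range.2 (by omega))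
    fun i _ _ => by positivity).trans_eq (sum_congr rfl fun i _ => by ring)

theorem sum_range_choose_le_exp_mul_binEntropy {α : ℝ} (h0 : 0 < α) (h1 : α ≤ 1 / 2)
    {m r : ℕ} (hr : (r : ℝ) ≤ α * m) :
    ∑ i ∈ range (r + 1), (m.choose i : ℝ) ≤ exp (m * binEntropy α) := by
  have h1α : 0 < 1 - α := by linarith
  set x := α / (1 - α) with hx
  have hx0 : 0 < x := div_pos h0 h1α
  have hx1 : x ≤ 1 := (div_le_one h1α).2 (by linarith)
  have hrm : r ≤ m := by
    exact_mod_cast hr.trans (mul_le_of_le_one_left (Nat.cast_nonneg m) (by linarith))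
  have hlog : log (1 + x) = binEntropy α + α * log x := by
    rw [show 1 + x = (1 - α)⁻¹ by rw [hx]; field_simp; ring, hx, log_div h0.ne' h1α.ne',
      binEntropy, log_inv, log_inv]
    ring
  have hpow : (1 + x) ^ m = exp (m * binEntropy α) * x ^ (α * m) := by
    rw [rpow_def_of_pos hx0, ← exp_add, ← rpow_natCast, rpow_def_of_pos (by positivity), hlog]
    congr 1; ring
  have hsum : (∑ i ∈ range (r + 1), (m.choose i : ℝ)) * x ^ (α * m) ≤ (1 + x) ^ m := by
    rw [sum_mul]
    refine (sum_le_sum fun i hi => ?_).trans (sum_range_choose_mul_pow_le_one_add_pow hx0.le hrm)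
    have hi : (i : ℝ) ≤ α * m := (Nat.cast_le.2 (Nat.lt_succ_iff.1 (mem_range.1 hi))).trans hr
    rw [← rpow_natCast]
    exact mul_le_mul_of_nonneg_left (rpow_le_rpow_of_exponent_ge hx0 hx1 hi) (by positivity)
  rw [hpow] at hsum
  exact le_of_mul_le_mul_right hsum (by positivity)

theorem exists_binary_code_of_mul_exp_binEntropy_le {α : ℝ} (h0 : 0 < α) (h1 : α ≤ 1 / 2)
    {m n : ℕ} (hn : n * exp (m * binEntropy α) ≤ 2 ^ m) :
    ∃ S : Finset (Fin m → Bool), #S = n ∧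
      (S : Set (Fin m → Bool)).Pairwise fun a b => α * m < hammingDist a b := by
  set r := ⌊α * m⌋₊
  have hball : ∀ x : Fin m → Bool,
      #{y | hammingDist y x ≤ r} ≤ ∑ k ∈ range (r + 1), m.choose k := fun x => by
    simpa using card_hammingDist_le_le_sum_choose x r
  have hcard : n * ∑ k ∈ range (r + 1), m.choose k ≤ Fintype.card (Fin m → Bool) := by
    rw [Fintype.card_fun, Fintype.card_bool, Fintype.card_fin]
    have hsum := sum_range_choose_le_exp_mul_binEntropy h0 h1 (r := r) (m := m)
      (Nat.floor_le (by positivity))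
    have : (n : ℝ) * ∑ k ∈ range (r + 1), (m.choose k : ℝ) ≤ 2 ^ m := by
      calc _ ≤ n * exp (m * binEntropy α) := by gcongr
        _ ≤ 2 ^ m := hn
    exact_mod_cast this
  obtain ⟨S, hS, hpair⟩ :=
    exists_card_eq_pairwise_not_of_card_le (fun x y => hammingDist x y ≤ r)
      (fun x => by simp) (fun x y h => hammingDist_comm x y ▸ h) hball hcard
  refine ⟨S, hS, hpair.mono' fun a b hab => ?_⟩
  exact (Nat.lt_floor_add_one _).trans_le (by exact_mod_cast not_le.1 hab)

theorem exists_binary_code_length_le_logb {α : ℝ} (h0 : 0 < α) (h1 : α < 1 / 2) :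
    ∃ c : ℝ, 1 ≤ c ∧ ∀ n : ℕ, 2 ≤ n → ∃ m : ℕ, (m : ℝ) ≤ c * logb 2 n ∧
      ∃ S : Finset (Fin m → Bool), #S = n ∧
        (S : Set (Fin m → Bool)).Pairwise fun a b => α * m < hammingDist a b := by
  set δ := log 2 - binEntropy α
  have hδ : 0 < δ := sub_pos.2 (binEntropy_lt_log_two.2 (by norm_num; linarith))
  refine ⟨log 2 / δ + 1, le_add_of_nonneg_left (div_nonneg (log_nonneg one_le_two) hδ.le),
    fun n hn => ?_⟩
  have hn0 : (0 : ℝ) < n := by positivity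
  have hlogb : 1 ≤ logb 2 n := by
    rw [le_logb_iff_rpow_le one_lt_two hn0]; exact_mod_cast hn
  set m := ⌈log n / δ⌉₊
  refine ⟨m, ?_, exists_binary_code_of_mul_exp_binEntropy_le h0 h1.le ?_⟩
  · calc (m : ℝ) ≤ log n / δ + 1 := (Nat.ceil_lt_add_one (by positivity)).le
      _ = log 2 / δ * logb 2 n + 1 := by rw [logb]; field_simp [(log_pos one_lt_two).ne']
      _ ≤ (log 2 / δ + 1) * logb 2 n := by nlinarith
  · have hlog : log n ≤ m * δ := (div_le_iff₀ hδ).1 (Nat.le_ceil _)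
    calc (n : ℝ) * exp (m * binEntropy α) ≤ exp (m * δ) * exp (m * binEntropy α) := by
          gcongr; exact (exp_log hn0).symm.le.trans (exp_le_exp.2 hlog)
      _ = 2 ^ m := by
          rw [← exp_add, ← exp_log (two_pos (α := ℝ)), ← exp_nat_mul]
          congr 1
          ring

def signVector {ι : Type*} (a : ι → Bool) : ι → ℝ := fun i => if a i then 1 else -1

theorem signVector_injective {ι : Type*} : Function.Injective (signVector (ι := ι)) := by
  intro a b h
  funext i
  have := congrFun h i
  revert this
  unfold signVector
  cases a i <;> cases b i <;> norm_num

section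
variable {ι : Type*} [Fintype ι] {p : ℝ}

theorem sum_abs_signVector_sub_rpow (hp : p ≠ 0) (a b : ι → Bool) :
    ∑ i, |signVector a i - signVector b i| ^ p = hammingDist a b * 2 ^ p := by
  classical
  have hterm : ∀ i, |signVector a i - signVector b i| ^ p = if a i ≠ b i then 2 ^ p else 0 := by
    intro i
    unfold signVector
    cases a i <;> cases b i <;> norm_num [zero_rpow hp]
  simp only [hterm, sum_ite, sum_const_zero, add_zero, sum_const, nsmul_eq_mul, hammingDist]

theorem sum_abs_signVector_rpow (a : ι → Bool) :
    ∑ i, |signVector a i| ^ p = Fintype.card ι := by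
  have hterm : ∀ i, |signVector a i| ^ p = 1 := fun i => by
    unfold signVector
    cases a i <;> norm_num
  simp [hterm]

end

theorem sum_abs_append_sub_rpow {m n : ℕ} (u u' : Fin m → ℝ) (v v' : Fin n → ℝ)
    (p : ℝ) :
    ∑ i, |Fin.append u v i - Fin.append u' v' i| ^ p
      = ∑ i, |u i - u' i| ^ p + ∑ i, |v i - v' i| ^ p := by
  simp [Fin.sum_univ_add]

theorem Fin.append_left_injective {α : Type*} {m n : ℕ} (v : Fin n → α) :
    Function.Injective fun u : Fin m → α => Fin.append u v := by
  intro u u' h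
  funext i
  simpa using congrFun h (Fin.castAdd n i)

theorem Fin.append_right_injective {α : Type*} {m n : ℕ} (u : Fin m → α) :
    Function.Injective fun v : Fin n → α => Fin.append u v := by
  intro v v' h
  funext i
  simpa using congrFun h (Fin.natAdd m i)

/-- For every `p > 2` there is a constant `c ≥ 1` such that for all sufficiently large `n`
there exist sets `A, B ⊆ ℝ^d` of cardinality `n` each, with `d ≤ c·log₂ n`, whose distinct
inner pairs are at `ℓp`-distance more than `((2^{p-3} + 1/2)·d)^{1/p}` and whose crossing
pairs are at `ℓp`-distance exactly `d^{1/p}`. -/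
theorem polar_pair_logarithmic_dimension (p : ℝ) (hp : 2 < p) :
    ∃ c : ℝ, 1 ≤ c ∧ ∃ n₀ : ℕ, ∀ n : ℕ, n₀ ≤ n →
      ∃ (d : ℕ) (A B : Finset (Fin d → ℝ)),
        (d : ℝ) ≤ c * Real.logb 2 (n : ℝ) ∧
        A.card = n ∧ B.card = n ∧
        (∀ u ∈ A, ∀ u' ∈ A, u ≠ u' →
          (((2 : ℝ) ^ (p - 3) + 1 / 2) * (d : ℝ)) ^ (1 / p)
            < (∑ i, |u i - u' i| ^ p) ^ (1 / p)) ∧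
        (∀ v ∈ B, ∀ v' ∈ B, v ≠ v' →
          (((2 : ℝ) ^ (p - 3) + 1 / 2) * (d : ℝ)) ^ (1 / p)
            < (∑ i, |v i - v' i| ^ p) ^ (1 / p)) ∧
        (∀ u ∈ A, ∀ v ∈ B,
          (∑ i, |u i - v i| ^ p) ^ (1 / p) = (d : ℝ) ^ (1 / p)) := by
  have hp0 : 0 < p := by linarith
  have hα : (1 : ℝ) / 4 + 2 ^ (-p) < 1 / 2 := by
    have : (2 : ℝ) ^ (-p) < 2 ^ (-2 : ℝ) := rpow_lt_rpow_of_exponent_lt one_lt_two (by linarith)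
    norm_num at this ⊢
    linarith
  obtain ⟨c, hc, hcode⟩ := exists_binary_code_length_le_logb (by positivity) hα
  refine ⟨2 * c, by linarith, 2, fun n hn => ?_⟩
  obtain ⟨m, hm, S, hS, hdist⟩ := hcode n hn
  have hthreshold :
      ((2 : ℝ) ^ (p - 3) + 1 / 2) * ((m + m : ℕ) : ℝ) = (1 / 4 + 2 ^ (-p)) * m * 2 ^ p := by
    rw [rpow_sub two_pos, rpow_neg zero_le_two]
    norm_num
    field_simp
    ring
  have hsep : ∀ a ∈ S, ∀ a' ∈ S, a ≠ a' →
      (((2 : ℝ) ^ (p - 3) + 1 / 2) * ((m + m : ℕ) : ℝ)) ^ (1 / p)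
        < (hammingDist a a' * 2 ^ p) ^ (1 / p) := fun a ha a' ha' hne =>
    rpow_lt_rpow (by positivity) (hthreshold ▸ by gcongr; exact hdist ha ha' hne) (by positivity)
  refine ⟨m + m, S.image fun a => Fin.append (signVector a) 0,
    S.image fun b => Fin.append 0 (signVector b), by push_cast; linarith, ?_, ?_, ?_, ?_, ?_⟩
  · exact (card_image_of_injective S
      ((Fin.append_left_injective 0).comp signVector_injective)).trans hS
  · exact (card_image_of_injective S
      ((Fin.append_right_injective 0).comp signVector_injective)).trans hS
  · simp only [forall_mem_image, sum_abs_append_sub_rpow, sum_abs_signVector_sub_rpow hp0.ne',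
      Pi.zero_apply, sub_self, abs_zero, zero_rpow hp0.ne', sum_const_zero, add_zero]
    exact fun a ha a' ha' hne => hsep a ha a' ha' (by rintro rfl; exact hne rfl)
  · simp only [forall_mem_image, sum_abs_append_sub_rpow, sum_abs_signVector_sub_rpow hp0.ne',
      Pi.zero_apply, sub_self, abs_zero, zero_rpow hp0.ne', sum_const_zero, zero_add]
    exact fun a ha a' ha' hne => hsep a ha a' ha' (by rintro rfl; exact hne rfl)
  · simp only [forall_mem_image, sum_abs_append_sub_rpow, Pi.zero_apply, sub_zero, zero_sub,
      abs_neg, sum_abs_signVector_rpow, Fintype.card_fin, Nat.cast_add, implies_true]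
end

section
/- Let d be a positive integer. For u ∈ {0,1}^d define a(u) ∈ ℝ^d by a(u)_j = 2·u_j, and for w ∈ {0,1}^d define b(w) ∈ ℝ^d by b(w)_j = 1 − 2·w_j. Then: (i) for any distinct u, u' ∈ {0,1}^d, ‖a(u) − a(u')‖_∞ ≥ 2, and for any distinct w, w' ∈ {0,1}^d, ‖b(w) − b(w')‖_∞ ≥ 2; (ii) for any u, w ∈ {0,1}^d, if Σ_{j=1}^d u_j·w_j = 0 then ‖a(u) − b(w)‖_∞ = 1; (iii) for any u, w ∈ {0,1}^d, if Σ_{j=1}^d u_j·w_j ≠ 0 then ‖a(u) − b(w)‖_∞ = 3. -/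
open Finset

/-! Everything is coordinatewise: on a coordinate where two points of the same family differ their
entries differ by exactly `2`, while `|2x - (1 - 2y)|` equals `3` if `x = y = 1` and `1` otherwise.
The `ℓ∞`-distance is then read off as the maximum over the (nonempty) set of coordinates. -/

lemma abs_two_mul_sub_two_mul_of_ne {x y : Fin 2} (h : x ≠ y) :
    |2 * ((x : ℕ) : ℝ) - 2 * ((y : ℕ) : ℝ)| = 2 := by
  revert h
  fin_cases x <;> fin_cases y <;> norm_num

lemma abs_two_mul_sub_one_sub_two_mul_of_mul_eq_zero {x y : Fin 2}
    (h : (x : ℕ) * (y : ℕ) = 0) : |2 * ((x : ℕ) : ℝ) - (1 - 2 * ((y : ℕ) : ℝ))| = 1 := by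
  revert h
  fin_cases x <;> fin_cases y <;> norm_num

lemma abs_two_mul_sub_one_sub_two_mul_of_mul_ne_zero {x y : Fin 2}
    (h : (x : ℕ) * (y : ℕ) ≠ 0) : |2 * ((x : ℕ) : ℝ) - (1 - 2 * ((y : ℕ) : ℝ))| = 3 := by
  revert h
  fin_cases x <;> fin_cases y <;> norm_num

lemma abs_two_mul_sub_one_sub_two_mul_le_three (x y : Fin 2) :
    |2 * ((x : ℕ) : ℝ) - (1 - 2 * ((y : ℕ) : ℝ))| ≤ 3 := by
  fin_cases x <;> fin_cases y <;> norm_num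

/-- The OV-to-Closest-Pair gadget in `L^∞`: mapping `u ∈ {0,1}^d` to `a(u) = 2u` and
`w ∈ {0,1}^d` to `b(w) = 1 - 2w`, distinct inner pairs are at `ℓ∞`-distance at least `2`,
orthogonal crossing pairs are at `ℓ∞`-distance exactly `1`, and non-orthogonal crossing
pairs are at `ℓ∞`-distance exactly `3`. -/
theorem ov_gadget_Linf (d : ℕ) (hd : 0 < d)
    (a b : (Fin d → Fin 2) → (Fin d → ℝ))
    (ha : ∀ u j, a u j = 2 * ((u j : ℕ) : ℝ))
    (hb : ∀ w j, b w j = 1 - 2 * ((w j : ℕ) : ℝ)) :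
    ((∀ u u' : Fin d → Fin 2, u ≠ u' → 2 ≤ ⨆ j, |a u j - a u' j|) ∧
     (∀ w w' : Fin d → Fin 2, w ≠ w' → 2 ≤ ⨆ j, |b w j - b w' j|)) ∧
    (∀ u w : Fin d → Fin 2,
      (∑ j, (u j : ℕ) * (w j : ℕ)) = 0 → (⨆ j, |a u j - b w j|) = 1) ∧
    (∀ u w : Fin d → Fin 2,
      (∑ j, (u j : ℕ) * (w j : ℕ)) ≠ 0 → (⨆ j, |a u j - b w j|) = 3) := by
  have : Nonempty (Fin d) := ⟨⟨0, hd⟩⟩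
  have hbdd (f : Fin d → ℝ) : BddAbove (Set.range f) := (Set.finite_range f).bddAbove
  refine ⟨⟨fun u u' hne => ?_, fun w w' hne => ?_⟩, fun u w horth => ?_, fun u w hnorth => ?_⟩
  · obtain ⟨j, hj⟩ := Function.ne_iff.mp hne
    refine le_ciSup_of_le (hbdd _) j ?_
    rw [ha, ha, abs_two_mul_sub_two_mul_of_ne hj]
  · obtain ⟨j, hj⟩ := Function.ne_iff.mp hne
    refine le_ciSup_of_le (hbdd _) j ?_
    rw [hb, hb, sub_sub_sub_cancel_left, abs_two_mul_sub_two_mul_of_ne (Ne.symm hj)]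
  · have hone (j : Fin d) : |a u j - b w j| = 1 := by
      rw [ha, hb, abs_two_mul_sub_one_sub_two_mul_of_mul_eq_zero
        (sum_eq_zero_iff.mp horth j (mem_univ j))]
    simp only [hone, ciSup_const]
  · obtain ⟨j, -, hj⟩ := exists_ne_zero_of_sum_ne_zero hnorth
    refine le_antisymm (ciSup_le fun i => ?_) (le_ciSup_of_le (hbdd _) j ?_)
    · rw [ha, hb]
      exact abs_two_mul_sub_one_sub_two_mul_le_three _ _
    · rw [ha, hb, abs_two_mul_sub_one_sub_two_mul_of_mul_ne_zero hj]
end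

section
/- Let n and d be positive integers, and let α > β ≥ 0 be real numbers. Suppose A, B ⊆ ℝ^d are sets each of cardinality n such that (i) for any two distinct u, v ∈ A, ‖u−v‖₂ > α, (ii) for any two distinct u, v ∈ B, ‖u−v‖₂ > α, and (iii) for every u ∈ A and v ∈ B, ‖u−v‖₂ ≤ β. Then d ≥ (n−3)/2. -/
/-!
Among `d + 2` points of `ℝ^d` there is a Radon partition: two disjoint parts whose convex hulls
share a point. Take such partitions `A₁ ⊔ A₂ ⊆ A` and `B₁ ⊔ B₂ ⊆ B`, with common points `z` and
`y`, and let `Iᵢ` and `Jⱼ` be the moments of inertia of `Aᵢ` about `z` and of `Bⱼ` about `y`.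
By the parallel axis theorem, the weighted mean squared distance between `Aᵢ` and `Bⱼ` is
`‖z - y‖² + Iᵢ + Jⱼ`, and that between `A₁` and `A₂` is `I₁ + I₂`. Hence
`α² < I₁ + I₂`, `α² < J₁ + J₂`, while `‖z - y‖² + Iᵢ + Jᵢ ≤ β²` for `i = 1, 2`,
which is impossible when `β < α`. So `A` or `B` has at most `d + 1` points.
-/

open Finset Module

theorem Finset.exists_disjoint_convexHull_inter_nonempty {𝕜 F : Type*} [Field 𝕜] [LinearOrder 𝕜]
    [IsStrictOrderedRing 𝕜] [AddCommGroup F] [Module 𝕜 F] [FiniteDimensional 𝕜 F] {s : Finset F}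
    (hs : finrank 𝕜 F + 2 ≤ #s) :
    ∃ t u : Finset F, t ⊆ s ∧ u ⊆ s ∧ Disjoint t u ∧
      (convexHull 𝕜 (t : Set F) ∩ convexHull 𝕜 (u : Set F)).Nonempty := by
  classical
  have hdep : ¬ AffineIndependent 𝕜 ((↑) : s → F) := fun hind => by
    have := hind.card_le_finrank_succ.trans
      (Nat.add_le_add_right (Submodule.finrank_le (vectorSpan 𝕜 (Set.range ((↑) : s → F)))) 1)
    rw [Fintype.card_coe] at this
    omega
  obtain ⟨I, hI⟩ := Convex.radon_partition hdep
  refine ⟨s.filter fun x => ∃ h : x ∈ s, ⟨x, h⟩ ∈ I, s.filter fun x => ∃ h : x ∈ s, ⟨x, h⟩ ∉ I,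
    filter_subset _ _, filter_subset _ _, ?_, ?_⟩
  · simp +contextual [disjoint_left]
  · convert hI using 3 <;> ext x <;> simp

section

variable {E : Type*} [NormedAddCommGroup E] [InnerProductSpace ℝ E]

structure IsBarycenter (s : Finset E) (w : E → ℝ) (z : E) : Prop where
  nonneg : ∀ x ∈ s, 0 ≤ w x
  sum_eq_one : ∑ x ∈ s, w x = 1
  sum_smul_eq : ∑ x ∈ s, w x • x = z

def inertia (s : Finset E) (w : E → ℝ) (z : E) : ℝ :=
  ∑ x ∈ s, w x * ‖x - z‖ ^ 2

theorem exists_isBarycenter_of_mem_convexHull {s : Finset E} {z : E}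
    (hz : z ∈ convexHull ℝ (s : Set E)) : ∃ w, IsBarycenter s w z :=
  let ⟨w, hw0, hw1, hwz⟩ := Finset.mem_convexHull'.1 hz
  ⟨w, hw0, hw1, hwz⟩

theorem sum_mul_le_of_forall_le {ι : Type*} {s : Finset ι} {w g : ι → ℝ} {r : ℝ}
    (hw0 : ∀ i ∈ s, 0 ≤ w i) (hw1 : ∑ i ∈ s, w i = 1) (hg : ∀ i ∈ s, g i ≤ r) :
    ∑ i ∈ s, w i * g i ≤ r :=
  calc ∑ i ∈ s, w i * g i ≤ ∑ i ∈ s, w i * r :=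
        sum_le_sum fun i hi => mul_le_mul_of_nonneg_left (hg i hi) (hw0 i hi)
    _ = r := by rw [← sum_mul, hw1, one_mul]

theorem lt_sum_mul_of_forall_lt {ι : Type*} {s : Finset ι} {w g : ι → ℝ} {r : ℝ}
    (hw0 : ∀ i ∈ s, 0 ≤ w i) (hw1 : ∑ i ∈ s, w i = 1) (hg : ∀ i ∈ s, r < g i) :
    r < ∑ i ∈ s, w i * g i := by
  obtain ⟨i, hi, hwi⟩ : ∃ i ∈ s, 0 < w i :=
    exists_lt_of_sum_lt (f := 0) (by simp [hw1])
  calc r = ∑ i ∈ s, w i * r := by rw [← sum_mul, hw1, one_mul]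
    _ < ∑ i ∈ s, w i * g i :=
        sum_lt_sum (fun i hi => mul_le_mul_of_nonneg_left (hg i hi).le (hw0 i hi))
          ⟨i, hi, mul_lt_mul_of_pos_left (hg i hi) hwi⟩

namespace IsBarycenter

variable {s t : Finset E} {w v : E → ℝ} {z y : E}

theorem sum_mul_norm_sub_sq (hz : IsBarycenter s w z) (q : E) :
    ∑ x ∈ s, w x * ‖x - q‖ ^ 2 = ‖z - q‖ ^ 2 + inertia s w z := by
  have hdev : ∑ x ∈ s, w x * inner ℝ (x - z) (z - q) = 0 := by
    simp_rw [← real_inner_smul_left, ← sum_inner, smul_sub, sum_sub_distrib, ← sum_smul,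
      hz.sum_eq_one, one_smul, hz.sum_smul_eq, sub_self, inner_zero_left]
  calc ∑ x ∈ s, w x * ‖x - q‖ ^ 2
      = ∑ x ∈ s, (w x * ‖x - z‖ ^ 2 + 2 * (w x * inner ℝ (x - z) (z - q))
          + w x * ‖z - q‖ ^ 2) := by
        refine sum_congr rfl fun x _ => ?_
        rw [← sub_add_sub_cancel x z q, norm_add_sq_real]
        ring
    _ = ‖z - q‖ ^ 2 + inertia s w z := by
        rw [sum_add_distrib, sum_add_distrib, ← mul_sum, hdev, ← sum_mul, hz.sum_eq_one,
          inertia]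
        ring

theorem sum_mul_sum_mul_norm_sub_sq (hz : IsBarycenter s w z) (hy : IsBarycenter t v y) :
    ∑ x ∈ s, w x * ∑ x' ∈ t, v x' * ‖x - x'‖ ^ 2
      = ‖z - y‖ ^ 2 + inertia s w z + inertia t v y := by
  simp_rw [← norm_neg (_ - _), neg_sub, hy.sum_mul_norm_sub_sq, ← norm_neg (y - _), neg_sub,
    mul_add, sum_add_distrib, ← sum_mul, hz.sum_eq_one, one_mul, hz.sum_mul_norm_sub_sq]

theorem lt_of_forall_lt_norm_sub_sq (hz : IsBarycenter s w z) (hy : IsBarycenter t v y)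
    {r : ℝ} (h : ∀ x ∈ s, ∀ x' ∈ t, r < ‖x - x'‖ ^ 2) :
    r < ‖z - y‖ ^ 2 + inertia s w z + inertia t v y := by
  rw [← hz.sum_mul_sum_mul_norm_sub_sq hy]
  exact lt_sum_mul_of_forall_lt hz.nonneg hz.sum_eq_one fun x hx =>
    lt_sum_mul_of_forall_lt hy.nonneg hy.sum_eq_one (h x hx)

theorem le_of_forall_norm_sub_sq_le (hz : IsBarycenter s w z) (hy : IsBarycenter t v y)
    {r : ℝ} (h : ∀ x ∈ s, ∀ x' ∈ t, ‖x - x'‖ ^ 2 ≤ r) :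
    ‖z - y‖ ^ 2 + inertia s w z + inertia t v y ≤ r := by
  rw [← hz.sum_mul_sum_mul_norm_sub_sq hy]
  exact sum_mul_le_of_forall_le hz.nonneg hz.sum_eq_one fun x hx =>
    sum_mul_le_of_forall_le hy.nonneg hy.sum_eq_one (h x hx)

end IsBarycenter

theorem min_card_le_finrank_add_one [FiniteDimensional ℝ E] {A B : Finset E} {α β : ℝ}
    (hβ : 0 ≤ β) (hαβ : β < α)
    (hAA : ∀ x ∈ A, ∀ x' ∈ A, x ≠ x' → α < dist x x')
    (hBB : ∀ x ∈ B, ∀ x' ∈ B, x ≠ x' → α < dist x x')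
    (hAB : ∀ x ∈ A, ∀ x' ∈ B, dist x x' ≤ β) :
    min #A #B ≤ finrank ℝ E + 1 := by
  by_contra! hcard
  obtain ⟨A₁, A₂, hA₁, hA₂, hA, z, hzA₁, hzA₂⟩ :=
    exists_disjoint_convexHull_inter_nonempty (𝕜 := ℝ) (s := A) (by omega)
  obtain ⟨B₁, B₂, hB₁, hB₂, hB, y, hyB₁, hyB₂⟩ :=
    exists_disjoint_convexHull_inter_nonempty (𝕜 := ℝ) (s := B) (by omega)
  obtain ⟨w₁, hw₁⟩ := exists_isBarycenter_of_mem_convexHull hzA₁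
  obtain ⟨w₂, hw₂⟩ := exists_isBarycenter_of_mem_convexHull hzA₂
  obtain ⟨v₁, hv₁⟩ := exists_isBarycenter_of_mem_convexHull hyB₁
  obtain ⟨v₂, hv₂⟩ := exists_isBarycenter_of_mem_convexHull hyB₂
  have separated {S S₁ S₂ : Finset E} (hS : ∀ x ∈ S, ∀ x' ∈ S, x ≠ x' → α < dist x x')
      (h₁ : S₁ ⊆ S) (h₂ : S₂ ⊆ S) (h : Disjoint S₁ S₂) :
      ∀ x ∈ S₁, ∀ x' ∈ S₂, α ^ 2 < ‖x - x'‖ ^ 2 := fun x hx x' hx' => by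
    rw [← dist_eq_norm]
    exact pow_lt_pow_left₀ (hS x (h₁ hx) x' (h₂ hx') (disjoint_iff_ne.1 h x hx x' hx'))
      (hβ.trans hαβ.le) two_ne_zero
  have close {S₁ S₂ : Finset E} (h₁ : S₁ ⊆ A) (h₂ : S₂ ⊆ B) :
      ∀ x ∈ S₁, ∀ x' ∈ S₂, ‖x - x'‖ ^ 2 ≤ β ^ 2 := fun x hx x' hx' => by
    rw [← dist_eq_norm]
    exact pow_le_pow_left₀ dist_nonneg (hAB x (h₁ hx) x' (h₂ hx')) 2
  have hAα := hw₁.lt_of_forall_lt_norm_sub_sq hw₂ (separated hAA hA₁ hA₂ hA)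
  have hBα := hv₁.lt_of_forall_lt_norm_sub_sq hv₂ (separated hBB hB₁ hB₂ hB)
  have h₁β := hw₁.le_of_forall_norm_sub_sq_le hv₁ (close hA₁ hB₁)
  have h₂β := hw₂.le_of_forall_norm_sub_sq_le hv₂ (close hA₂ hB₂)
  rw [sub_self, norm_zero] at hAα hBα
  nlinarith [sq_nonneg ‖z - y‖]

end

theorem L2_sphericity_lower_bound_general (n d : ℕ)
    (α β : ℝ) (hβ : 0 ≤ β) (hαβ : β < α)
    (A B : Finset (Fin d → ℝ)) (hA : A.card = n) (hB : B.card = n)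
    (hAA : ∀ u ∈ A, ∀ v ∈ A, u ≠ v → α < Real.sqrt (∑ i, (u i - v i) ^ 2))
    (hBB : ∀ u ∈ B, ∀ v ∈ B, u ≠ v → α < Real.sqrt (∑ i, (u i - v i) ^ 2))
    (hAB : ∀ u ∈ A, ∀ v ∈ B, Real.sqrt (∑ i, (u i - v i) ^ 2) ≤ β) :
    ((n : ℝ) - 3) / 2 ≤ (d : ℝ) := by
  let e : (Fin d → ℝ) ↪ EuclideanSpace ℝ (Fin d) := ⟨WithLp.toLp 2, WithLp.toLp_injective 2⟩
  have he (u v : Fin d → ℝ) : dist (e u) (e v) = Real.sqrt (∑ i, (u i - v i) ^ 2) := by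
    simp [e, EuclideanSpace.dist_eq, Real.dist_eq, sq_abs]
  have hcard := min_card_le_finrank_add_one (A := A.map e) (B := B.map e) hβ hαβ
    (by simpa only [forall_mem_map, e.injective.ne_iff, he] using hAA)
    (by simpa only [forall_mem_map, e.injective.ne_iff, he] using hBB)
    (by simpa only [forall_mem_map, he] using hAB)
  rw [card_map, card_map, hA, hB, min_self, finrank_euclideanSpace_fin] at hcard
  have : (n : ℝ) ≤ d + 1 := by exact_mod_cast hcard
  linarith [(d.cast_nonneg : (0 : ℝ) ≤ d)]

/-- Lower bound on the biclique sphericity in `L^2`: if `A, B ⊆ ℝ^d` each have `n` points,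
all distinct inner pairs are at Euclidean distance greater than `α`, and all crossing pairs
are at Euclidean distance at most `β`, where `α > β ≥ 0`, then `d ≥ (n - 3)/2`. -/
theorem L2_sphericity_lower_bound (n d : ℕ) (hn : 0 < n) (hd : 0 < d)
    (α β : ℝ) (hβ : 0 ≤ β) (hαβ : β < α)
    (A B : Finset (Fin d → ℝ)) (hA : A.card = n) (hB : B.card = n)
    (hAA : ∀ u ∈ A, ∀ v ∈ A, u ≠ v → α < Real.sqrt (∑ i, (u i - v i) ^ 2))
    (hBB : ∀ u ∈ B, ∀ v ∈ B, u ≠ v → α < Real.sqrt (∑ i, (u i - v i) ^ 2))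
    (hAB : ∀ u ∈ A, ∀ v ∈ B, Real.sqrt (∑ i, (u i - v i) ^ 2) ≤ β) :
    ((n : ℝ) - 3) / 2 ≤ (d : ℝ) :=
  L2_sphericity_lower_bound_general n d α β hβ hαβ A B hA hB hAA hBB hAB
end
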